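/- arXiv:1007.0972 — 3 statements merged into one kernel-verified Lean document; each statement's English description precedes it below -/
import Mathlib

section
/- Define φ : ℝ² → ℝ by φ(x,y) = exp(−1/sin²(πy)) · sin(2π(x + ln(y − ⌊y⌋))) if y ∉ ℤ, and φ(x,y) = 0 if y ∈ ℤ, where ⌊y⌋ is the integer part of y. Then φ is infinitely differentiable on all of ℝ² (of class C^∞) and is 1-periodic in each variable: φ(x+1, y) = φ(x, y) and φ(x, y+1) = φ(x, y) for all (x,y) ∈ ℝ². -/
open Real Set Filter Topology
open scoped Classical

namespace PhiAux

/-- The damping factor. -/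
noncomputable def E (t : ℝ) : ℝ := Real.exp (-(1 / Real.sin (Real.pi * t) ^ 2))

/-- A class of functions on (0,1), closed under differentiation, all bounded by
`C / sin(πt)^m`. -/
inductive Mem : (ℝ → ℝ) → Prop
  | const (c : ℝ) : Mem (fun _ => c)
  | sinpi : Mem (fun t => Real.sin (Real.pi * t))
  | cospi : Mem (fun t => Real.cos (Real.pi * t))
  | invsin : Mem (fun t => (Real.sin (Real.pi * t))⁻¹)
  | invt : Mem (fun t => t⁻¹)
  | coslog : Mem (fun t => Real.cos (2 * Real.pi * Real.log t))
  | sinlog : Mem (fun t => Real.sin (2 * Real.pi * Real.log t))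
  | add {f g} : Mem f → Mem g → Mem (fun t => f t + g t)
  | mul {f g} : Mem f → Mem g → Mem (fun t => f t * g t)

lemma sin_pos_of_Ioo {t : ℝ} (ht : t ∈ Ioo (0:ℝ) 1) : 0 < Real.sin (Real.pi * t) :=
  Real.sin_pos_of_pos_of_lt_pi (by have := Real.pi_pos; nlinarith [ht.1])
    (by nlinarith [Real.pi_pos, ht.1, ht.2])

lemma inv_t_le {t : ℝ} (ht : t ∈ Ioo (0:ℝ) 1) :
    t⁻¹ ≤ Real.pi / Real.sin (Real.pi * t) := by
  have hs := sin_pos_of_Ioo ht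
  have h1 : Real.sin (Real.pi * t) ≤ Real.pi * t := Real.sin_le (by nlinarith [Real.pi_pos, ht.1])
  rw [inv_eq_one_div, div_le_div_iff₀ ht.1 hs]
  nlinarith [ht.1]

lemma inv_one_sub_le {t : ℝ} (ht : t ∈ Ioo (0:ℝ) 1) :
    (1 - t)⁻¹ ≤ Real.pi / Real.sin (Real.pi * t) := by
  have hs := sin_pos_of_Ioo ht
  have h1 : Real.sin (Real.pi * (1 - t)) ≤ Real.pi * (1 - t) :=
    Real.sin_le (by nlinarith [Real.pi_pos, ht.2])
  have h2 : Real.sin (Real.pi * (1 - t)) = Real.sin (Real.pi * t) := by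
    rw [show Real.pi * (1 - t) = Real.pi - Real.pi * t by ring, Real.sin_pi_sub]
  rw [h2] at h1
  rw [inv_eq_one_div, div_le_div_iff₀ (by nlinarith [ht.2]) hs]
  nlinarith [ht.2]

lemma Mem.bound {f : ℝ → ℝ} (hf : Mem f) :
    ∃ C : ℝ, ∃ m : ℕ, 0 ≤ C ∧ ∀ t ∈ Ioo (0:ℝ) 1, |f t| ≤ C / Real.sin (Real.pi * t) ^ m := by
  induction hf with
  | const c =>
    exact ⟨|c|, 0, abs_nonneg _, fun t ht => by simp⟩
  | sinpi =>
    exact ⟨1, 0, zero_le_one, fun t ht => by simpa using Real.abs_sin_le_one _⟩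
  | cospi =>
    exact ⟨1, 0, zero_le_one, fun t ht => by simpa using Real.abs_cos_le_one _⟩
  | invsin =>
    refine ⟨1, 1, zero_le_one, fun t ht => ?_⟩
    have hs := sin_pos_of_Ioo ht
    rw [abs_of_pos (by positivity), pow_one, one_div]
  | invt =>
    refine ⟨Real.pi, 1, Real.pi_pos.le, fun t ht => ?_⟩
    rw [abs_of_pos (by exact inv_pos.mpr ht.1), pow_one]
    exact inv_t_le ht
  | coslog =>
    exact ⟨1, 0, zero_le_one, fun t ht => by simpa using Real.abs_cos_le_one _⟩
  | sinlog =>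
    exact ⟨1, 0, zero_le_one, fun t ht => by simpa using Real.abs_sin_le_one _⟩
  | @add f g hf hg ihf ihg =>
    obtain ⟨C1, m1, hC1, h1⟩ := ihf
    obtain ⟨C2, m2, hC2, h2⟩ := ihg
    refine ⟨C1 + C2, max m1 m2, by positivity, fun t ht => ?_⟩
    have hs := sin_pos_of_Ioo ht
    have hs1 : Real.sin (Real.pi * t) ≤ 1 := Real.sin_le_one _
    have e1 : Real.sin (Real.pi * t) ^ max m1 m2 ≤ Real.sin (Real.pi * t) ^ m1 :=
      pow_le_pow_of_le_one hs.le hs1 (le_max_left _ _)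
    have e2 : Real.sin (Real.pi * t) ^ max m1 m2 ≤ Real.sin (Real.pi * t) ^ m2 :=
      pow_le_pow_of_le_one hs.le hs1 (le_max_right _ _)
    calc |f t + g t| ≤ |f t| + |g t| := abs_add_le _ _
      _ ≤ C1 / Real.sin (Real.pi * t) ^ m1 + C2 / Real.sin (Real.pi * t) ^ m2 :=
          add_le_add (h1 t ht) (h2 t ht)
      _ ≤ C1 / Real.sin (Real.pi * t) ^ max m1 m2 + C2 / Real.sin (Real.pi * t) ^ max m1 m2 :=
          add_le_add (by gcongr) (by gcongr)
      _ = (C1 + C2) / Real.sin (Real.pi * t) ^ max m1 m2 := by ring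
  | @mul f g hf hg ihf ihg =>
    obtain ⟨C1, m1, hC1, h1⟩ := ihf
    obtain ⟨C2, m2, hC2, h2⟩ := ihg
    refine ⟨C1 * C2, m1 + m2, by positivity, fun t ht => ?_⟩
    have hs := sin_pos_of_Ioo ht
    rw [abs_mul, pow_add, ← div_mul_div_comm]
    exact mul_le_mul (h1 t ht) (h2 t ht) (abs_nonneg _) (by positivity)

lemma hasDerivAt_pimul (t : ℝ) : HasDerivAt (fun t : ℝ => Real.pi * t) Real.pi t := by
  simpa using (hasDerivAt_id t).const_mul Real.pi

noncomputable def pieceFn (q : ℝ → ℝ) : ℝ → ℝ := fun t =>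
  if t ∈ Ioo (0:ℝ) 1 then Real.exp (-(1 / Real.sin (Real.pi * t) ^ 2)) * q t else 0

lemma key1 (C : ℝ) (m : ℕ) :
    Tendsto (fun s : ℝ => Real.exp (-(1 / s ^ 2)) * (C / s ^ m)) (𝓝[>] (0:ℝ)) (𝓝 0) := by
  have h1 : Tendsto (fun s : ℝ => s ^ 2) (𝓝[>] (0:ℝ)) (𝓝[>] (0:ℝ)) := by
    apply tendsto_nhdsWithin_of_tendsto_nhds_of_eventually_within
    · exact ((continuous_pow 2).tendsto' 0 0 (by simp)).mono_left nhdsWithin_le_nhds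
    · exact eventually_mem_nhdsWithin.mono fun s hs => Set.mem_Ioi.mpr (pow_pos (Set.mem_Ioi.mp hs) 2)
  have h2 : Tendsto (fun s : ℝ => (s ^ 2)⁻¹) (𝓝[>] (0:ℝ)) atTop :=
    tendsto_inv_nhdsGT_zero.comp h1
  have h3 : Tendsto (fun u : ℝ => |C| * (u ^ m * Real.exp (-u))) atTop (𝓝 0) := by
    simpa using (tendsto_pow_mul_exp_neg_atTop_nhds_zero m).const_mul |C|
  have h4 := h3.comp h2
  apply squeeze_zero_norm' _ h4
  filter_upwards [Ioo_mem_nhdsGT_of_mem (left_mem_Ico.2 one_pos), self_mem_nhdsWithin]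
    with s hs hs0
  have hs1 : (0:ℝ) < s := hs.1
  have hsle : s ≤ 1 := hs.2.le
  have hpow : s ^ (2*m) ≤ s ^ m := pow_le_pow_of_le_one hs1.le hsle (by omega)
  have hEpos : (0:ℝ) < Real.exp (-(1 / s ^ 2)) := Real.exp_pos _
  simp only [Function.comp]
  rw [Real.norm_eq_abs, abs_mul, abs_of_pos hEpos, abs_div, abs_of_pos (pow_pos hs1 m)]
  have key : |C| / s ^ m ≤ |C| * ((s ^ 2)⁻¹) ^ m := by
    have e : ((s ^ 2)⁻¹) ^ m = (s ^ (2 * m))⁻¹ := by rw [pow_mul, inv_pow]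
    rw [e, ← div_eq_mul_inv]
    gcongr
  calc Real.exp (-(1 / s ^ 2)) * (|C| / s ^ m)
      ≤ Real.exp (-(1 / s ^ 2)) * (|C| * ((s ^ 2)⁻¹) ^ m) := by
        apply mul_le_mul_of_nonneg_left key hEpos.le
    _ = |C| * (((s ^ 2)⁻¹) ^ m * Real.exp (-(s ^ 2)⁻¹)) := by
        rw [one_div]; ring

lemma Bfun_tendsto (C : ℝ) (m : ℕ) {a : ℝ} (ha : Real.sin (Real.pi * a) = 0) :
    Tendsto (pieceFn (fun t => C / Real.sin (Real.pi * t) ^ m)) (𝓝 a) (𝓝 0) := by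
  have hsplit : 𝓝 a = 𝓝[Ioo (0:ℝ) 1] a ⊔ 𝓝[(Ioo (0:ℝ) 1)ᶜ] a := by
    rw [← nhdsWithin_union, union_compl_self, nhdsWithin_univ]
  rw [hsplit, tendsto_sup]
  constructor
  · have hsin : Tendsto (fun t => Real.sin (Real.pi * t)) (𝓝[Ioo (0:ℝ) 1] a) (𝓝[>] (0:ℝ)) := by
      apply tendsto_nhdsWithin_of_tendsto_nhds_of_eventually_within
      · have hc : Continuous fun t : ℝ => Real.sin (Real.pi * t) :=
          Real.continuous_sin.comp (continuous_const.mul continuous_id)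
        have := hc.tendsto a
        rw [ha] at this
        exact this.mono_left nhdsWithin_le_nhds
      · exact eventually_mem_nhdsWithin.mono fun t ht => sin_pos_of_Ioo ht
    have hcomp := (key1 C m).comp hsin
    apply Tendsto.congr' _ hcomp
    filter_upwards [eventually_mem_nhdsWithin] with t ht
    simp only [Function.comp, pieceFn, if_pos ht]
  · apply Tendsto.congr' _ tendsto_const_nhds
    filter_upwards [eventually_mem_nhdsWithin] with t ht
    simp only [pieceFn, if_neg ht]


lemma Mem.hasDeriv {f : ℝ → ℝ} (hf : Mem f) :
    ∃ f' : ℝ → ℝ, Mem f' ∧ ∀ t ∈ Ioo (0:ℝ) 1, HasDerivAt f (f' t) t := by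
  induction hf with
  | const c =>
    exact ⟨fun _ => 0, Mem.const 0, fun t _ => hasDerivAt_const t c⟩
  | sinpi =>
    refine ⟨fun t => Real.pi * Real.cos (Real.pi * t),
      Mem.mul (Mem.const Real.pi) Mem.cospi, fun t _ => ?_⟩
    simpa [mul_comm] using (hasDerivAt_pimul t).sin
  | cospi =>
    refine ⟨fun t => -Real.pi * Real.sin (Real.pi * t),
      Mem.mul (Mem.const (-Real.pi)) Mem.sinpi, fun t _ => ?_⟩
    have h := (hasDerivAt_pimul t).cos
    convert h using 1; ring
  | invsin =>
    refine ⟨fun t => -Real.pi * Real.cos (Real.pi * t) *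
        ((Real.sin (Real.pi * t))⁻¹ * (Real.sin (Real.pi * t))⁻¹),
      Mem.mul (Mem.mul (Mem.const (-Real.pi)) Mem.cospi) (Mem.mul Mem.invsin Mem.invsin),
      fun t ht => ?_⟩
    have hs := (sin_pos_of_Ioo ht).ne'
    have h := ((hasDerivAt_pimul t).sin).inv hs
    refine h.congr_deriv ?_
    field_simp
  | invt =>
    refine ⟨fun t => -1 * (t⁻¹ * t⁻¹),
      Mem.mul (Mem.const (-1)) (Mem.mul Mem.invt Mem.invt), fun t ht => ?_⟩
    have h := hasDerivAt_inv ht.1.ne'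
    refine h.congr_deriv ?_
    field_simp
  | coslog =>
    refine ⟨fun t => -(2 * Real.pi) * Real.sin (2 * Real.pi * Real.log t) * t⁻¹,
      Mem.mul (Mem.mul (Mem.const (-(2 * Real.pi))) Mem.sinlog) Mem.invt, fun t ht => ?_⟩
    have h := ((Real.hasDerivAt_log ht.1.ne').const_mul (2 * Real.pi)).cos
    convert h using 1; ring
  | sinlog =>
    refine ⟨fun t => 2 * Real.pi * Real.cos (2 * Real.pi * Real.log t) * t⁻¹,
      Mem.mul (Mem.mul (Mem.const (2 * Real.pi)) Mem.coslog) Mem.invt, fun t ht => ?_⟩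
    have h := ((Real.hasDerivAt_log ht.1.ne').const_mul (2 * Real.pi)).sin
    convert h using 1; ring
  | @add f g hf hg ihf ihg =>
    obtain ⟨f', hf', hdf⟩ := ihf
    obtain ⟨g', hg', hdg⟩ := ihg
    exact ⟨fun t => f' t + g' t, Mem.add hf' hg',
      fun t ht => (hdf t ht).add (hdg t ht)⟩
  | @mul f g hf hg ihf ihg =>
    obtain ⟨f', hf', hdf⟩ := ihf
    obtain ⟨g', hg', hdg⟩ := ihg
    exact ⟨fun t => f' t * g t + f t * g' t,
      Mem.add (Mem.mul hf' hg) (Mem.mul hf hg'), fun t ht => (hdf t ht).mul (hdg t ht)⟩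

lemma hasDerivAt_pieceFn_zero {q : ℝ → ℝ} (hq : Mem q) : HasDerivAt (pieceFn q) 0 0 := by
  obtain ⟨C, m, hC, hb⟩ := hq.bound
  rw [hasDerivAt_iff_tendsto_slope]
  have hsin0 : Real.sin (Real.pi * 0) = 0 := by simp
  apply squeeze_zero_norm' _
    ((Bfun_tendsto (C * Real.pi) (m + 1) hsin0).mono_left nhdsWithin_le_nhds)
  filter_upwards [self_mem_nhdsWithin] with t ht
  have h0 : pieceFn q 0 = 0 := by simp [pieceFn]
  by_cases hmem : t ∈ Ioo (0:ℝ) 1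
  · have ht0 : (0:ℝ) < t := hmem.1
    have hs := sin_pos_of_Ioo hmem
    have hE : (0:ℝ) < Real.exp (-(1 / Real.sin (Real.pi * t) ^ 2)) := Real.exp_pos _
    rw [slope_def_field, h0, sub_zero, sub_zero]
    simp only [pieceFn, if_pos hmem]
    rw [Real.norm_eq_abs, abs_div, abs_mul, abs_of_pos hE, abs_of_pos ht0, div_eq_mul_inv]
    have h3 : |q t| * t⁻¹ ≤ C / Real.sin (Real.pi * t) ^ m * (Real.pi / Real.sin (Real.pi * t)) :=
      mul_le_mul (hb t hmem) (inv_t_le hmem) (inv_nonneg.2 ht0.le) (by positivity)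
    calc Real.exp (-(1 / Real.sin (Real.pi * t) ^ 2)) * |q t| * t⁻¹
        = Real.exp (-(1 / Real.sin (Real.pi * t) ^ 2)) * (|q t| * t⁻¹) := by ring
      _ ≤ Real.exp (-(1 / Real.sin (Real.pi * t) ^ 2)) *
          (C / Real.sin (Real.pi * t) ^ m * (Real.pi / Real.sin (Real.pi * t))) :=
          mul_le_mul_of_nonneg_left h3 hE.le
      _ = Real.exp (-(1 / Real.sin (Real.pi * t) ^ 2)) *
          (C * Real.pi / Real.sin (Real.pi * t) ^ (m + 1)) := by
          rw [div_mul_div_comm, ← pow_succ]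
  · have hmem' : ¬(0 < t ∧ t < 1) := by simpa [Set.mem_Ioo] using hmem
    rw [slope_def_field, h0, sub_zero]
    simp [pieceFn, hmem']

lemma hasDerivAt_pieceFn_one {q : ℝ → ℝ} (hq : Mem q) : HasDerivAt (pieceFn q) 0 1 := by
  obtain ⟨C, m, hC, hb⟩ := hq.bound
  rw [hasDerivAt_iff_tendsto_slope]
  have hsin1 : Real.sin (Real.pi * 1) = 0 := by simp
  apply squeeze_zero_norm' _
    ((Bfun_tendsto (C * Real.pi) (m + 1) hsin1).mono_left nhdsWithin_le_nhds)
  filter_upwards [self_mem_nhdsWithin] with t ht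
  have h0 : pieceFn q 1 = 0 := by simp [pieceFn]
  by_cases hmem : t ∈ Ioo (0:ℝ) 1
  · have ht1 : t < 1 := hmem.2
    have hs := sin_pos_of_Ioo hmem
    have hE : (0:ℝ) < Real.exp (-(1 / Real.sin (Real.pi * t) ^ 2)) := Real.exp_pos _
    rw [slope_def_field, h0, sub_zero]
    simp only [pieceFn, if_pos hmem]
    rw [Real.norm_eq_abs, abs_div, abs_mul, abs_of_pos hE, div_eq_mul_inv]
    have habs : |t - 1| = 1 - t := by rw [abs_of_neg (by linarith)]; ring
    rw [habs]
    have h3 : |q t| * (1 - t)⁻¹ ≤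
        C / Real.sin (Real.pi * t) ^ m * (Real.pi / Real.sin (Real.pi * t)) :=
      mul_le_mul (hb t hmem) (inv_one_sub_le hmem) (inv_nonneg.2 (by linarith)) (by positivity)
    calc Real.exp (-(1 / Real.sin (Real.pi * t) ^ 2)) * |q t| * (1 - t)⁻¹
        = Real.exp (-(1 / Real.sin (Real.pi * t) ^ 2)) * (|q t| * (1 - t)⁻¹) := by ring
      _ ≤ Real.exp (-(1 / Real.sin (Real.pi * t) ^ 2)) *
          (C / Real.sin (Real.pi * t) ^ m * (Real.pi / Real.sin (Real.pi * t))) :=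
          mul_le_mul_of_nonneg_left h3 hE.le
      _ = Real.exp (-(1 / Real.sin (Real.pi * t) ^ 2)) *
          (C * Real.pi / Real.sin (Real.pi * t) ^ (m + 1)) := by
          rw [div_mul_div_comm, ← pow_succ]
  · have hmem' : ¬(0 < t ∧ t < 1) := by simpa [Set.mem_Ioo] using hmem
    rw [slope_def_field, h0, sub_zero]
    simp [pieceFn, hmem']

lemma hasDerivAt_inner {t : ℝ} (ht : t ∈ Ioo (0:ℝ) 1) :
    HasDerivAt (fun t => -(1 / Real.sin (Real.pi * t) ^ 2))
      (2 * Real.pi * Real.cos (Real.pi * t) * ((Real.sin (Real.pi * t))⁻¹ *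
        ((Real.sin (Real.pi * t))⁻¹ * (Real.sin (Real.pi * t))⁻¹))) t := by
  have hs := sin_pos_of_Ioo ht
  have h1 := (((hasDerivAt_pimul t).sin.pow 2).inv (pow_pos hs 2).ne').neg
  simp only [one_div]
  refine h1.congr_deriv ?_
  simp only [Pi.pow_apply]
  field_simp
  ring

theorem pieceFn_hasDeriv {q : ℝ → ℝ} (hq : Mem q) :
    ∃ q₁ : ℝ → ℝ, Mem q₁ ∧ ∀ t, HasDerivAt (pieceFn q) (pieceFn q₁ t) t := by
  obtain ⟨q', hq', hd⟩ := hq.hasDeriv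
  have hw : Mem (fun t => 2 * Real.pi * Real.cos (Real.pi * t) * ((Real.sin (Real.pi * t))⁻¹ *
      ((Real.sin (Real.pi * t))⁻¹ * (Real.sin (Real.pi * t))⁻¹))) :=
    Mem.mul (Mem.mul (Mem.const (2 * Real.pi)) Mem.cospi)
      (Mem.mul Mem.invsin (Mem.mul Mem.invsin Mem.invsin))
  refine ⟨fun t => q' t + q t * (2 * Real.pi * Real.cos (Real.pi * t) *
      ((Real.sin (Real.pi * t))⁻¹ * ((Real.sin (Real.pi * t))⁻¹ * (Real.sin (Real.pi * t))⁻¹))),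
    Mem.add hq' (Mem.mul hq hw), fun t => ?_⟩
  rcases lt_trichotomy t 0 with h | h | h
  · have hz : pieceFn (fun t => q' t + q t * (2 * Real.pi * Real.cos (Real.pi * t) *
        ((Real.sin (Real.pi * t))⁻¹ * ((Real.sin (Real.pi * t))⁻¹ *
          (Real.sin (Real.pi * t))⁻¹)))) t = 0 :=
      if_neg fun hm => absurd hm.1 (not_lt.2 h.le)
    rw [hz]
    apply (hasDerivAt_const t (0:ℝ)).congr_of_eventuallyEq
    filter_upwards [Iio_mem_nhds h] with s hs
    exact if_neg fun hm => absurd hm.1 (not_lt.2 hs.le)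
  · subst h
    have hz : pieceFn (fun t => q' t + q t * (2 * Real.pi * Real.cos (Real.pi * t) *
        ((Real.sin (Real.pi * t))⁻¹ * ((Real.sin (Real.pi * t))⁻¹ *
          (Real.sin (Real.pi * t))⁻¹)))) 0 = 0 := by simp [pieceFn]
    rw [hz]
    exact hasDerivAt_pieceFn_zero hq
  · rcases lt_trichotomy t 1 with h1 | h1 | h1
    · have hmem : t ∈ Ioo (0:ℝ) 1 := ⟨h, h1⟩
      have hE := (hasDerivAt_inner hmem).exp
      have hprod := hE.mul (hd t hmem)
      have heq : pieceFn q =ᶠ[𝓝 t]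
          fun u => Real.exp (-(1 / Real.sin (Real.pi * u) ^ 2)) * q u := by
        filter_upwards [isOpen_Ioo.mem_nhds hmem] with u hu
        exact if_pos hu
      have := hprod.congr_of_eventuallyEq heq
      refine this.congr_deriv ?_
      rw [pieceFn, if_pos hmem]
      ring
    · subst h1
      have hz : pieceFn (fun t => q' t + q t * (2 * Real.pi * Real.cos (Real.pi * t) *
          ((Real.sin (Real.pi * t))⁻¹ * ((Real.sin (Real.pi * t))⁻¹ *
            (Real.sin (Real.pi * t))⁻¹)))) 1 = 0 := by simp [pieceFn]
      rw [hz]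
      exact hasDerivAt_pieceFn_one hq
    · have hz : pieceFn (fun t => q' t + q t * (2 * Real.pi * Real.cos (Real.pi * t) *
          ((Real.sin (Real.pi * t))⁻¹ * ((Real.sin (Real.pi * t))⁻¹ *
            (Real.sin (Real.pi * t))⁻¹)))) t = 0 :=
        if_neg fun hm => absurd hm.2 (not_lt.2 h1.le)
      rw [hz]
      apply (hasDerivAt_const t (0:ℝ)).congr_of_eventuallyEq
      filter_upwards [Ioi_mem_nhds h1] with s hs
      exact if_neg fun hm => absurd hm.2 (not_lt.2 hs.le)

theorem pieceFn_contDiff_nat (n : ℕ) : ∀ q : ℝ → ℝ, Mem q →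
    ContDiff ℝ (n : WithTop ℕ∞) (pieceFn q) := by
  induction n with
  | zero =>
    intro q hq
    obtain ⟨q₁, _, hd⟩ := pieceFn_hasDeriv hq
    rw [Nat.cast_zero, contDiff_zero]
    exact continuous_iff_continuousAt.mpr fun t => (hd t).differentiableAt.continuousAt
  | succ n ih =>
    intro q hq
    obtain ⟨q₁, hq₁, hd⟩ := pieceFn_hasDeriv hq
    have hderiv : deriv (pieceFn q) = pieceFn q₁ := funext fun t => (hd t).deriv
    rw [show ((n + 1 : ℕ) : WithTop ℕ∞) = (n : WithTop ℕ∞) + 1 by push_cast; rfl,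
      contDiff_succ_iff_deriv]
    refine ⟨fun t => (hd t).differentiableAt, ?_, ?_⟩
    · intro hcontra
      exact absurd hcontra (by simp)
    · rw [hderiv]
      exact ih q₁ hq₁

theorem pieceFn_contDiff {q : ℝ → ℝ} (hq : Mem q) :
    ContDiff ℝ ((⊤ : ℕ∞) : WithTop ℕ∞) (pieceFn q) :=
  contDiff_infty.mpr fun n => pieceFn_contDiff_nat n q hq

lemma sin_sq_int_shift (y : ℝ) (n : ℤ) :
    Real.sin (Real.pi * (y - n)) ^ 2 = Real.sin (Real.pi * y) ^ 2 := by
  have h : Real.pi * (y - n) = Real.pi * y - n * Real.pi := by ring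
  rw [h, Real.sin_sub_int_mul_pi, mul_pow]
  have h1 : ((-1:ℝ) ^ n) ^ 2 = 1 := by
    rcases Int.even_or_odd n with he | ho
    · rw [he.neg_one_zpow]; norm_num
    · rw [Odd.neg_one_zpow ho]; norm_num
  rw [h1, one_mul]

/-- The periodized one-variable function. -/
noncomputable def glueFn (q : ℝ → ℝ) : ℝ → ℝ := fun y =>
  if ∃ n : ℤ, y = (n:ℝ) then 0
  else Real.exp (-(1 / Real.sin (Real.pi * y) ^ 2)) * q (y - ⌊y⌋)

lemma glueFn_eq (q : ℝ → ℝ) (n : ℤ) {y : ℝ} (hy : y ∈ Ioo ((n:ℝ) - 1) ((n:ℝ) + 1)) :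
    glueFn q y = pieceFn q (y - n) + pieceFn q (y - n + 1) := by
  by_cases hint : ∃ m : ℤ, y = (m:ℝ)
  · obtain ⟨m, rfl⟩ := hint
    have hmn : m = n := by
      have h1 : (n:ℝ) - 1 < m := hy.1
      have h2 : (m:ℝ) < n + 1 := hy.2
      have h1' : n - 1 < m := by exact_mod_cast h1
      have h2' : m < n + 1 := by exact_mod_cast h2
      omega
    subst hmn
    have e0 : (m:ℝ) - m = 0 := by ring
    rw [glueFn, if_pos ⟨m, rfl⟩, e0]
    norm_num [pieceFn]
  · rw [glueFn, if_neg hint]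
    rcases lt_or_ge y n with hlt | hge
    · have hy1 : y - n + 1 ∈ Ioo (0:ℝ) 1 := ⟨by linarith [hy.1], by linarith⟩
      have hy0 : y - (n:ℝ) ∉ Ioo (0:ℝ) 1 := fun hm => by
        have := hm.1; linarith
      have hfl : ⌊y⌋ = n - 1 := by
        rw [Int.floor_eq_iff]
        constructor
        · push_cast
          have hne : y ≠ ((n:ℝ) - 1) := by
            intro hcon
            exact hint ⟨n - 1, by push_cast; linarith⟩
          cases (lt_or_eq_of_le (le_of_lt hy.1)) with
          | inl h => linarith [hy.1]
          | inr h => exact absurd h.symm hne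
        · push_cast; linarith
      rw [pieceFn, if_neg hy0, pieceFn, if_pos hy1, hfl]
      have hE : Real.sin (Real.pi * (y - n + 1)) ^ 2 = Real.sin (Real.pi * y) ^ 2 := by
        have : y - (n:ℝ) + 1 = y - ((n - 1 : ℤ) : ℝ) := by push_cast; ring
        rw [this, sin_sq_int_shift]
      have harg : y - ((n - 1 : ℤ) : ℝ) = y - (n:ℝ) + 1 := by push_cast; ring
      rw [harg, hE, zero_add]
    · have hyn : y ≠ (n:ℝ) := fun h => hint ⟨n, h⟩
      have hgt : (n:ℝ) < y := lt_of_le_of_ne hge (Ne.symm hyn)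
      have hy0 : y - (n:ℝ) ∈ Ioo (0:ℝ) 1 := ⟨by linarith, by linarith [hy.2]⟩
      have hy1 : y - (n:ℝ) + 1 ∉ Ioo (0:ℝ) 1 := fun hm => by
        have := hm.2; linarith
      have hfl : ⌊y⌋ = n := by
        rw [Int.floor_eq_iff]
        exact ⟨hge, by push_cast; linarith [hy.2]⟩
      rw [pieceFn, if_pos hy0, pieceFn, if_neg hy1, hfl]
      have hE : Real.sin (Real.pi * (y - n)) ^ 2 = Real.sin (Real.pi * y) ^ 2 :=
        sin_sq_int_shift y n
      rw [hE, add_zero]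

lemma glueFn_contDiff {q : ℝ → ℝ} (hq : Mem q) :
    ContDiff ℝ ((⊤ : ℕ∞) : WithTop ℕ∞) (glueFn q) := by
  rw [contDiff_iff_contDiffAt]
  intro y₀
  set n := ⌊y₀⌋ with hn
  have hmem : y₀ ∈ Ioo ((n:ℝ) - 1) ((n:ℝ) + 1) :=
    ⟨by linarith [Int.floor_le y₀], by exact_mod_cast Int.lt_floor_add_one y₀⟩
  have hF : ContDiffAt ℝ ((⊤ : ℕ∞) : WithTop ℕ∞)
      (fun y => pieceFn q (y - n) + pieceFn q (y - n + 1)) y₀ :=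
    (((pieceFn_contDiff hq).comp (contDiff_id.sub contDiff_const)).add
      ((pieceFn_contDiff hq).comp ((contDiff_id.sub contDiff_const).add
        contDiff_const))).contDiffAt
  apply hF.congr_of_eventuallyEq
  filter_upwards [isOpen_Ioo.mem_nhds hmem] with y hy
  exact glueFn_eq q n hy

end PhiAux

open PhiAux

/-- The stream function φ(x,y) = exp(−1/sin²(πy)) · sin(2π(x + ln(y − ⌊y⌋))) for y ∉ ℤ,
and φ(x,y) = 0 for y ∈ ℤ, from the paper's Remark. -/
noncomputable def phi (z : ℝ × ℝ) : ℝ :=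
  if ∃ n : ℤ, z.2 = (n : ℝ) then 0
  else Real.exp (-(1 / Real.sin (Real.pi * z.2) ^ 2)) *
    Real.sin (2 * Real.pi * (z.1 + Real.log (z.2 - ⌊z.2⌋)))

/-- The function φ is C^∞ on ℝ² and 1-periodic in each variable. -/
theorem phi_smooth_and_periodic :
    ContDiff ℝ (⊤ : ℕ∞) phi ∧
    (∀ x y : ℝ, phi (x + 1, y) = phi (x, y)) ∧
    (∀ x y : ℝ, phi (x, y + 1) = phi (x, y)) := by
  refine ⟨?_, ?_, ?_⟩
  · have hphi : phi = fun z : ℝ × ℝ =>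
        glueFn (fun t => Real.cos (2 * Real.pi * Real.log t)) z.2 *
          Real.sin (2 * Real.pi * z.1) +
        glueFn (fun t => Real.sin (2 * Real.pi * Real.log t)) z.2 *
          Real.cos (2 * Real.pi * z.1) := by
      funext z
      obtain ⟨x, y⟩ := z
      by_cases h : ∃ n : ℤ, y = (n : ℝ)
      · simp [phi, glueFn, h]
      · simp only [phi, glueFn]
        rw [if_neg h, if_neg h, if_neg h]
        have harg : 2 * Real.pi * (x + Real.log (y - ⌊y⌋)) =
            2 * Real.pi * x + 2 * Real.pi * Real.log (y - ⌊y⌋) := by ring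
        rw [harg, Real.sin_add]
        ring
    rw [hphi]
    have h1 := (glueFn_contDiff Mem.coslog).comp (contDiff_snd (E := ℝ) (F := ℝ))
    have h2 := (glueFn_contDiff Mem.sinlog).comp (contDiff_snd (E := ℝ) (F := ℝ))
    have h3 : ContDiff ℝ ((⊤ : ℕ∞) : WithTop ℕ∞)
        (fun z : ℝ × ℝ => Real.sin (2 * Real.pi * z.1)) :=
      Real.contDiff_sin.comp (contDiff_const.mul contDiff_fst)
    have h4 : ContDiff ℝ ((⊤ : ℕ∞) : WithTop ℕ∞)
        (fun z : ℝ × ℝ => Real.cos (2 * Real.pi * z.1)) :=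
      Real.contDiff_cos.comp (contDiff_const.mul contDiff_fst)
    exact (h1.mul h3).add (h2.mul h4)
  · intro x y
    by_cases h : ∃ n : ℤ, y = (n : ℝ)
    · simp [phi, h]
    · simp only [phi]
      rw [if_neg h, if_neg h]
      have harg : 2 * Real.pi * ((x + 1) + Real.log (y - ⌊y⌋)) =
          2 * Real.pi * (x + Real.log (y - ⌊y⌋)) + 2 * Real.pi := by ring
      rw [harg, Real.sin_add_two_pi]
  · intro x y
    have hcond : (∃ n : ℤ, y + 1 = (n : ℝ)) ↔ (∃ n : ℤ, y = (n : ℝ)) := by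
      constructor
      · rintro ⟨n, hn⟩
        exact ⟨n - 1, by push_cast; linarith⟩
      · rintro ⟨n, hn⟩
        exact ⟨n + 1, by push_cast; linarith⟩
    by_cases h : ∃ n : ℤ, y = (n : ℝ)
    · simp only [phi]
      rw [if_pos (by simpa using hcond.mpr h), if_pos (by simpa using h)]
    · simp only [phi]
      rw [if_neg (by simpa using fun hc => h (hcond.mp hc)), if_neg (by simpa using h)]
      have h1 : Real.sin (Real.pi * (y + 1)) ^ 2 = Real.sin (Real.pi * y) ^ 2 := by
        have := sin_sq_int_shift (y + 1) 1
        rw [show (y + 1) - ((1:ℤ):ℝ) = y by push_cast; ring] at this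
        exact this.symm
      have h2 : y + 1 - (↑⌊y + 1⌋ : ℝ) = y - ⌊y⌋ := by
        rw [Int.floor_add_one]
        push_cast
        ring
      rw [h1, h2]
end

section
/- Let φ : ℝ² → ℝ be defined by φ(x,y) = exp(−1/sin²(πy)) · sin(2π(x + ln(y − ⌊y⌋))) for y ∉ ℤ and φ(x,y) = 0 for y ∈ ℤ, and let q = ∇⊥φ = (−∂φ/∂y, ∂φ/∂x). Let G = {(x, e^{−x}) : x > 0} be the part of the graph of x ↦ e^{−x} lying between the lines y = 0 and y = 1. Then there exists a differentiable curve γ : I → ℝ² on an open interval I with γ'(t) = q(γ(t)) for all t ∈ I and range γ(I) = G; moreover G is an unbounded subset of ℝ² and G + v ≠ G for every nonzero v ∈ ℝ². In particular, q possesses an unbounded trajectory that is not periodic. -/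
open Real
open scoped Classical

/-- The advection field q = ∇⊥φ = (−∂φ/∂y, ∂φ/∂x). -/
noncomputable def qfield (z : ℝ × ℝ) : ℝ × ℝ :=
  (-(fderiv ℝ phi z (0, 1)), fderiv ℝ phi z (1, 0))

/-- The part of the graph of x ↦ e^{−x} lying between the lines y = 0 and y = 1. -/
noncomputable def G : Set (ℝ × ℝ) :=
  (fun x : ℝ => (x, Real.exp (-x))) '' Set.Ioi (0 : ℝ)





noncomputable def Af (y : ℝ) : ℝ := Real.exp (-(Real.sin (Real.pi * y) ^ 2)⁻¹)

lemma sin_pi_pos {y : ℝ} (hy : y ∈ Set.Ioo (0:ℝ) 1) : 0 < Real.sin (Real.pi * y) := by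
  apply Real.sin_pos_of_pos_of_lt_pi
  · exact mul_pos Real.pi_pos hy.1
  · nlinarith [Real.pi_pos, hy.2]

noncomputable def psi (p : ℝ × ℝ) : ℝ :=
  Af p.2 * Real.sin (2 * Real.pi * (p.1 + Real.log p.2))

lemma phi_eventually_eq {z : ℝ × ℝ} (hz : z.2 ∈ Set.Ioo (0:ℝ) 1) :
    phi =ᶠ[nhds z] psi := by
  have hopen : IsOpen {p : ℝ × ℝ | p.2 ∈ Set.Ioo (0:ℝ) 1} :=
    isOpen_Ioo.preimage continuous_snd
  filter_upwards [hopen.mem_nhds hz] with p hp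
  have h1 : ¬ ∃ n : ℤ, p.2 = (n : ℝ) := by
    rintro ⟨n, hn⟩
    have h0 : (0:ℝ) < (n:ℝ) := hn ▸ hp.1
    have h1' : (n:ℝ) < 1 := hn ▸ hp.2
    have : (0:ℤ) < n := by exact_mod_cast h0
    have : n < 1 := by exact_mod_cast h1'
    omega
  have hfl : ⌊p.2⌋ = 0 := Int.floor_eq_zero_iff.2 ⟨hp.1.le, hp.2⟩
  simp only [phi, psi, Af, if_neg h1, hfl, Int.cast_zero, sub_zero, one_div]

lemma qfield_on_graph {x y : ℝ} (hy : y ∈ Set.Ioo (0:ℝ) 1) (hxy : x + Real.log y = 0) :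
    qfield (x, y) = (-(Af y * (2 * Real.pi * y⁻¹)), Af y * (2 * Real.pi)) := by
  have hy0 : y ≠ 0 := ne_of_gt hy.1
  have hsin : Real.sin (Real.pi * y) ≠ 0 := ne_of_gt (sin_pi_pos hy)
  have hsin2 : Real.sin (Real.pi * y) ^ 2 ≠ 0 := pow_ne_zero _ hsin
  have hAy : HasDerivAt (fun t : ℝ => Real.sin (Real.pi * t)) (Real.cos (Real.pi * y) * Real.pi) y := by
    have := (Real.hasDerivAt_sin (Real.pi * y)).comp y ((hasDerivAt_id y).const_mul Real.pi)
    simpa [Function.comp_def] using this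
  have hA2 : HasDerivAt (fun t : ℝ => Real.sin (Real.pi * t) ^ 2)
      (2 * Real.sin (Real.pi * y) ^ 1 * (Real.cos (Real.pi * y) * Real.pi)) y := by
    simpa using hAy.fun_pow 2
  have hAinv := hA2.inv hsin2
  have hAf : HasDerivAt Af
      (Real.exp (-(Real.sin (Real.pi * y) ^ 2)⁻¹) *
        -(-(2 * Real.sin (Real.pi * y) ^ 1 * (Real.cos (Real.pi * y) * Real.pi)) /
          (Real.sin (Real.pi * y) ^ 2) ^ 2)) y := hAinv.neg.exp
  set a' : ℝ := Real.exp (-(Real.sin (Real.pi * y) ^ 2)⁻¹) *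
        -(-(2 * Real.sin (Real.pi * y) ^ 1 * (Real.cos (Real.pi * y) * Real.pi)) /
          (Real.sin (Real.pi * y) ^ 2) ^ 2) with ha'
  have hg1 : HasFDerivAt (fun p : ℝ × ℝ => Af p.2)
      (a' • ContinuousLinearMap.snd ℝ ℝ ℝ) (x, y) :=
    by have := hAf.comp_hasFDerivAt (x, y) (hasFDerivAt_snd (𝕜 := ℝ) (E := ℝ) (F := ℝ) (p := (x, y))); exact this
  have hw : HasFDerivAt (fun p : ℝ × ℝ => 2 * Real.pi * (p.1 + Real.log p.2))
      ((2 * Real.pi) • (ContinuousLinearMap.fst ℝ ℝ ℝ + y⁻¹ • ContinuousLinearMap.snd ℝ ℝ ℝ)) (x, y) := by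
    have hlog : HasFDerivAt (fun p : ℝ × ℝ => Real.log p.2)
        (y⁻¹ • ContinuousLinearMap.snd ℝ ℝ ℝ) (x, y) :=
      by have := (Real.hasDerivAt_log hy0).comp_hasFDerivAt (x, y) (hasFDerivAt_snd (𝕜 := ℝ) (E := ℝ) (F := ℝ) (p := (x, y))); exact this
    exact ((hasFDerivAt_fst).add hlog).const_mul (2 * Real.pi)
  have hw0 : 2 * Real.pi * (x + Real.log y) = 0 := by rw [hxy]; ring
  have hg2 : HasFDerivAt (fun p : ℝ × ℝ => Real.sin (2 * Real.pi * (p.1 + Real.log p.2)))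
      (Real.cos (2 * Real.pi * (x + Real.log y)) •
        ((2 * Real.pi) • (ContinuousLinearMap.fst ℝ ℝ ℝ + y⁻¹ • ContinuousLinearMap.snd ℝ ℝ ℝ))) (x, y) :=
    by have := (Real.hasDerivAt_sin (2 * Real.pi * (x + Real.log y))).comp_hasFDerivAt (x, y) hw; exact this
  have hpsi : HasFDerivAt psi
      (Af y • (Real.cos (2 * Real.pi * (x + Real.log y)) •
        ((2 * Real.pi) • (ContinuousLinearMap.fst ℝ ℝ ℝ + y⁻¹ • ContinuousLinearMap.snd ℝ ℝ ℝ))) +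
       Real.sin (2 * Real.pi * (x + Real.log y)) • (a' • ContinuousLinearMap.snd ℝ ℝ ℝ)) (x, y) :=
    hg1.mul hg2
  have hphi := hpsi.congr_of_eventuallyEq (phi_eventually_eq (z := (x, y)) hy)
  have hfd := hphi.fderiv
  have hcos : Real.cos (2 * Real.pi * (x + Real.log y)) = 1 := by rw [hw0, Real.cos_zero]
  have hsin0 : Real.sin (2 * Real.pi * (x + Real.log y)) = 0 := by rw [hw0, Real.sin_zero]
  rw [qfield, hfd]
  simp only [hcos, hsin0, zero_smul, add_zero, one_smul,
    ContinuousLinearMap.add_apply, ContinuousLinearMap.smul_apply,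
    ContinuousLinearMap.coe_fst', ContinuousLinearMap.coe_snd', smul_eq_mul]
  norm_num



lemma G_unbounded : ¬ Bornology.IsBounded G := by
  intro h
  obtain ⟨C, hC⟩ := isBounded_iff_forall_norm_le.1 h
  set x : ℝ := max C 0 + 1 with hx
  have hx0 : 0 < x := by positivity
  have hmem : ((x, Real.exp (-x)) : ℝ × ℝ) ∈ G := ⟨x, hx0, rfl⟩
  have h1 := hC _ hmem
  have h2 : ‖((x, Real.exp (-x)) : ℝ × ℝ)‖ ≥ |x| := by
    simpa using norm_fst_le ((x, Real.exp (-x)) : ℝ × ℝ)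
  have : |x| = x := abs_of_pos hx0
  have hCx : x ≤ C := by linarith [this ▸ h2]
  have : C < x := by
    have := le_max_left C 0
    linarith
  linarith

lemma G_nonperiodic : ∀ v : ℝ × ℝ, v ≠ 0 → (fun z : ℝ × ℝ => z + v) '' G ≠ G := by
  intro v hv h
  obtain ⟨a, b⟩ := v
  have key : ∀ x : ℝ, 0 < x → Real.exp (-(x + a)) = Real.exp (-x) + b := by
    intro x hx
    have hmem : ((x, Real.exp (-x)) : ℝ × ℝ) ∈ G := ⟨x, hx, rfl⟩
    have : ((x, Real.exp (-x)) : ℝ × ℝ) + (a, b) ∈ G := by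
      rw [← h]; exact ⟨_, hmem, rfl⟩
    obtain ⟨x', hx', hxx'⟩ := this
    have h1 : x' = x + a := (congrArg Prod.fst hxx' : _)
    have h2 : Real.exp (-x') = Real.exp (-x) + b := (congrArg Prod.snd hxx' : _)
    rw [h1] at h2; exact h2
  have k1 := key 1 one_pos
  have k2 := key 2 two_pos
  rw [show -((1:ℝ) + a) = -1 + -a by ring, Real.exp_add] at k1
  rw [show -((2:ℝ) + a) = -2 + -a by ring, Real.exp_add] at k2
  have hea : Real.exp (-a) = 1 := by
    have h12 : Real.exp (-2) < Real.exp (-1) := Real.exp_lt_exp.2 (by norm_num)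
    nlinarith [Real.exp_pos (-1), Real.exp_pos (-2)]
  have ha : a = 0 := by
    have h0 : Real.exp (-a) = Real.exp 0 := by rw [hea, Real.exp_zero]
    have := Real.exp_injective h0
    linarith
  have hb : b = 0 := by rw [ha] at k1; simp [Real.exp_add] at k1; linarith [k1]
  exact hv (by simp [ha, hb, Prod.ext_iff])



noncomputable def ff (s : ℝ) : ℝ := Real.exp ((Real.sin (Real.pi * s) ^ 2)⁻¹) / (2 * Real.pi)

noncomputable def F (y : ℝ) : ℝ := ∫ t in (1/2 : ℝ)..y, ff t

lemma ff_pos (s : ℝ) : 0 < ff s := by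
  unfold ff; positivity

lemma ff_contOn : ContinuousOn ff (Set.Ioo (0:ℝ) 1) := by
  intro y hy
  have hsin : Real.sin (Real.pi * y) ^ 2 ≠ 0 := pow_ne_zero _ (ne_of_gt (sin_pi_pos hy))
  apply ContinuousAt.continuousWithinAt
  apply ContinuousAt.div_const
  apply Real.continuous_exp.continuousAt.comp
  exact ((((Real.continuous_sin.comp (continuous_const.mul continuous_id)).pow 2).continuousAt)).inv₀ hsin

lemma ff_meas : Measurable ff := by
  apply Measurable.div_const
  apply Real.measurable_exp.comp
  exact (((Real.continuous_sin.comp (continuous_const.mul continuous_id)).pow 2).measurable).inv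

lemma ff_intble {a b : ℝ} (ha : a ∈ Set.Ioo (0:ℝ) 1) (hb : b ∈ Set.Ioo (0:ℝ) 1) :
    IntervalIntegrable ff MeasureTheory.volume a b := by
  apply ContinuousOn.intervalIntegrable
  apply ff_contOn.mono
  exact Set.OrdConnected.uIcc_subset Set.ordConnected_Ioo ha hb

lemma half_mem : (1/2 : ℝ) ∈ Set.Ioo (0:ℝ) 1 := by norm_num

lemma F_hasDerivAt {y : ℝ} (hy : y ∈ Set.Ioo (0:ℝ) 1) : HasDerivAt F (ff y) y := by
  apply intervalIntegral.integral_hasDerivAt_right (ff_intble half_mem hy)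
    (ff_meas.stronglyMeasurable.stronglyMeasurableAtFilter)
  exact (ff_contOn y hy).continuousAt (Ioo_mem_nhds hy.1 hy.2)

lemma F_contOn : ContinuousOn F (Set.Ioo (0:ℝ) 1) :=
  fun y hy => ((F_hasDerivAt hy).continuousAt).continuousWithinAt

lemma F_strictMono : StrictMonoOn F (Set.Ioo (0:ℝ) 1) := by
  apply strictMonoOn_of_deriv_pos (convex_Ioo _ _) F_contOn
  intro y hy
  rw [interior_Ioo] at hy
  rw [(F_hasDerivAt hy).deriv]
  exact ff_pos y

lemma ff_lower_aux {s u : ℝ} (hsin : 0 < Real.sin (Real.pi * s)) (hu : Real.sin (Real.pi * s) ≤ u) :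
    (u ^ 2)⁻¹ / (2 * Real.pi) ≤ ff s := by
  have hu0 : 0 < u := lt_of_lt_of_le hsin hu
  have h1 : Real.sin (Real.pi * s) ^ 2 ≤ u ^ 2 := by nlinarith
  have h2 : (u ^ 2)⁻¹ ≤ (Real.sin (Real.pi * s) ^ 2)⁻¹ := by
    apply inv_anti₀ (by positivity) h1
  have h3 : (Real.sin (Real.pi * s) ^ 2)⁻¹ ≤ Real.exp ((Real.sin (Real.pi * s) ^ 2)⁻¹) :=
    le_trans (by linarith [Real.add_one_le_exp ((Real.sin (Real.pi * s) ^ 2)⁻¹)]) le_rfl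
  unfold ff
  gcongr
  · exact le_trans h2 h3

lemma F_lbound {ε : ℝ} (hε : ε ∈ Set.Ioc (0:ℝ) (1/4)) :
    F ε ≤ F (1/4) - 1/(2*Real.pi^3) * (1/ε - 4) := by
  have hπ := Real.pi_pos
  have hεI : ε ∈ Set.Ioo (0:ℝ) 1 := ⟨hε.1, by linarith [hε.2]⟩
  have hq : (1/4:ℝ) ∈ Set.Ioo (0:ℝ) 1 := by norm_num
  have hsub : F (1/4) - F ε = ∫ t in ε..(1/4:ℝ), ff t := by
    rw [F, F, ← intervalIntegral.integral_interval_sub_left (ff_intble half_mem hq) (ff_intble half_mem hεI)]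
  have hcont_g : ContinuousOn (fun s : ℝ => 1/(2*Real.pi^3) * (s^2)⁻¹) (Set.uIcc ε (1/4)) := by
    apply ContinuousOn.mul continuousOn_const
    apply ContinuousOn.inv₀ (continuousOn_pow 2)
    intro s hs
    rw [Set.uIcc_of_le hε.2] at hs
    have : 0 < s := lt_of_lt_of_le hε.1 hs.1
    positivity
  have hint_g : IntervalIntegrable (fun s : ℝ => 1/(2*Real.pi^3) * (s^2)⁻¹)
      MeasureTheory.volume ε (1/4) := hcont_g.intervalIntegrable
  have hg_eval : (∫ s in ε..(1/4:ℝ), 1/(2*Real.pi^3) * (s^2)⁻¹) = 1/(2*Real.pi^3) * (1/ε - 4) := by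
    have hd : ∀ s ∈ Set.uIcc ε (1/4:ℝ), HasDerivAt (fun s : ℝ => -(1/(2*Real.pi^3)) * s⁻¹)
        (1/(2*Real.pi^3) * (s^2)⁻¹) s := by
      intro s hs
      rw [Set.uIcc_of_le hε.2] at hs
      have hs0 : s ≠ 0 := ne_of_gt (lt_of_lt_of_le hε.1 hs.1)
      have := (hasDerivAt_inv hs0).const_mul (-(1/(2*Real.pi^3)))
      refine this.congr_deriv ?_
      ring
    rw [intervalIntegral.integral_eq_sub_of_hasDerivAt hd hint_g]
    have hε0 : ε ≠ 0 := ne_of_gt hε.1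
    field_simp
    ring
  have hmono : (∫ s in ε..(1/4:ℝ), 1/(2*Real.pi^3) * (s^2)⁻¹) ≤ ∫ t in ε..(1/4:ℝ), ff t := by
    apply intervalIntegral.integral_mono_on hε.2 hint_g (ff_intble hεI hq)
    intro s hs
    have hs0 : 0 < s := lt_of_lt_of_le hε.1 hs.1
    have hs1 : s < 1 := by linarith [hs.2]
    have hsin := sin_pi_pos ⟨hs0, hs1⟩
    have hle : Real.sin (Real.pi * s) ≤ Real.pi * s := Real.sin_le (by positivity)
    have := ff_lower_aux hsin hle
    calc 1/(2*Real.pi^3) * (s^2)⁻¹ = ((Real.pi * s)^2)⁻¹ / (2*Real.pi) := by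
          field_simp
      _ ≤ ff s := this
  linarith [hsub ▸ (le_trans (le_of_eq hg_eval.symm) hmono)]

lemma F_ubound {δ : ℝ} (hδ : δ ∈ Set.Ico (3/4:ℝ) 1) :
    F (3/4) + 1/(2*Real.pi^3) * (1/(1-δ) - 4) ≤ F δ := by
  have hπ := Real.pi_pos
  have hδI : δ ∈ Set.Ioo (0:ℝ) 1 := ⟨by linarith [hδ.1], hδ.2⟩
  have hq : (3/4:ℝ) ∈ Set.Ioo (0:ℝ) 1 := by norm_num
  have hsub : F δ - F (3/4) = ∫ t in (3/4:ℝ)..δ, ff t := by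
    rw [F, F, ← intervalIntegral.integral_interval_sub_left (ff_intble half_mem hδI) (ff_intble half_mem hq)]
  have hcont_g : ContinuousOn (fun s : ℝ => 1/(2*Real.pi^3) * ((1-s)^2)⁻¹) (Set.uIcc (3/4:ℝ) δ) := by
    apply ContinuousOn.mul continuousOn_const
    apply ContinuousOn.inv₀ (((continuous_const.sub continuous_id).pow 2).continuousOn)
    intro s hs
    rw [Set.uIcc_of_le hδ.1] at hs
    have : s < 1 := lt_of_le_of_lt hs.2 hδ.2
    have : 0 < 1 - s := by linarith
    exact pow_ne_zero _ this.ne'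
  have hint_g : IntervalIntegrable (fun s : ℝ => 1/(2*Real.pi^3) * ((1-s)^2)⁻¹)
      MeasureTheory.volume (3/4) δ := hcont_g.intervalIntegrable
  have hg_eval : (∫ s in (3/4:ℝ)..δ, 1/(2*Real.pi^3) * ((1-s)^2)⁻¹)
      = 1/(2*Real.pi^3) * (1/(1-δ) - 4) := by
    have hd : ∀ s ∈ Set.uIcc (3/4:ℝ) δ, HasDerivAt (fun s : ℝ => (1/(2*Real.pi^3)) * (1-s)⁻¹)
        (1/(2*Real.pi^3) * ((1-s)^2)⁻¹) s := by
      intro s hs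
      rw [Set.uIcc_of_le hδ.1] at hs
      have hs1 : s < 1 := lt_of_le_of_lt hs.2 hδ.2
      have hne : (1:ℝ) - s ≠ 0 := by intro h; linarith [h]
      have hlin : HasDerivAt (fun s : ℝ => 1 - s) (-1) s := by
        simpa using (hasDerivAt_id s).const_sub 1
      have := (hlin.inv hne).const_mul (1/(2*Real.pi^3))
      refine this.congr_deriv ?_
      ring
    rw [intervalIntegral.integral_eq_sub_of_hasDerivAt hd hint_g]
    have h1δ : (1:ℝ) - δ ≠ 0 := by intro h; have := hδ.2; linarith
    field_simp
    ring
  have hmono : (∫ s in (3/4:ℝ)..δ, 1/(2*Real.pi^3) * ((1-s)^2)⁻¹) ≤ ∫ t in (3/4:ℝ)..δ, ff t := by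
    apply intervalIntegral.integral_mono_on hδ.1 hint_g (ff_intble hq hδI)
    intro s hs
    have hs0 : 0 < s := by linarith [hs.1]
    have hs1 : s < 1 := lt_of_le_of_lt hs.2 hδ.2
    have hsin := sin_pi_pos ⟨hs0, hs1⟩
    have heq : Real.sin (Real.pi * s) = Real.sin (Real.pi * (1 - s)) := by
      rw [show Real.pi * (1 - s) = Real.pi - Real.pi * s by ring, Real.sin_pi_sub]
    have hle : Real.sin (Real.pi * s) ≤ Real.pi * (1 - s) := by
      rw [heq]; exact Real.sin_le (by nlinarith)
    have := ff_lower_aux hsin hle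
    calc 1/(2*Real.pi^3) * ((1-s)^2)⁻¹ = ((Real.pi * (1-s))^2)⁻¹ / (2*Real.pi) := by
          field_simp
      _ ≤ ff s := this
  linarith [hsub ▸ (le_trans (le_of_eq hg_eval.symm) hmono)]

lemma F_surj (c : ℝ) : ∃ y ∈ Set.Ioo (0:ℝ) 1, F y = c := by
  have hπ := Real.pi_pos
  have hπ3 : 0 < 2 * Real.pi ^ 3 := by positivity
  set M : ℝ := max (2*Real.pi^3*(F (1/4) - c)) 0 with hM
  have hM0 : 0 ≤ M := le_max_right _ _
  have hM1 : 2*Real.pi^3*(F (1/4) - c) ≤ M := le_max_left _ _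
  set ε : ℝ := 1/(M+5) with hε
  have hεIoc : ε ∈ Set.Ioc (0:ℝ) (1/4) := by
    constructor
    · positivity
    · rw [hε]; rw [div_le_div_iff₀ (by linarith) (by norm_num)]; linarith
  have hFε : F ε < c := by
    have h1 := F_lbound hεIoc
    have h2 : 1/ε = M + 5 := by rw [hε]; field_simp
    rw [h2] at h1
    have h3 : 1/(2*Real.pi^3) * (M + 5 - 4) = (M+1)/(2*Real.pi^3) := by ring
    rw [h3] at h1
    have h4 : F (1/4) - c ≤ M/(2*Real.pi^3) := by
      rw [le_div_iff₀ hπ3]; linarith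
    have h5 : 0 < 1/(2*Real.pi^3) := by positivity
    have : (M+1)/(2*Real.pi^3) = M/(2*Real.pi^3) + 1/(2*Real.pi^3) := by ring
    linarith [this ▸ h1]
  set N : ℝ := max (2*Real.pi^3*(c - F (3/4))) 0 with hN
  have hN0 : 0 ≤ N := le_max_right _ _
  have hN1 : 2*Real.pi^3*(c - F (3/4)) ≤ N := le_max_left _ _
  set δ : ℝ := 1 - 1/(N+5) with hδ
  have hδIco : δ ∈ Set.Ico (3/4:ℝ) 1 := by
    constructor
    · rw [hδ]
      have : 1/(N+5) ≤ 1/5 := by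
        rw [div_le_div_iff₀ (by linarith) (by norm_num)]; linarith
      linarith
    · rw [hδ]
      have : 0 < 1/(N+5) := by positivity
      linarith
  have hFδ : c < F δ := by
    have h1 := F_ubound hδIco
    have h2 : 1/(1-δ) = N + 5 := by
      rw [hδ, show (1:ℝ) - (1 - 1/(N+5)) = 1/(N+5) by ring, one_div_one_div]
    rw [h2] at h1
    have h4 : c - F (3/4) ≤ N/(2*Real.pi^3) := by
      rw [le_div_iff₀ hπ3]; linarith
    have h5 : 0 < 1/(2*Real.pi^3) := by positivity
    have h3 : 1/(2*Real.pi^3) * (N + 5 - 4) = N/(2*Real.pi^3) + 1/(2*Real.pi^3) := by ring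
    linarith [h3 ▸ h1]
  have hεδ : ε ≤ δ := by
    have h1 : ε ≤ 1/4 := hεIoc.2
    have h2 : (3/4:ℝ) ≤ δ := hδIco.1
    exact le_trans (le_trans h1 (by norm_num : (1/4:ℝ) ≤ 3/4)) h2
  have hsubset : Set.Icc ε δ ⊆ Set.Ioo (0:ℝ) 1 := fun s hs =>
    ⟨lt_of_lt_of_le hεIoc.1 hs.1, lt_of_le_of_lt hs.2 hδIco.2⟩
  have hIVT := intermediate_value_Ioo hεδ (F_contOn.mono hsubset)
  have hc : c ∈ Set.Ioo (F ε) (F δ) := ⟨hFε, hFδ⟩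
  obtain ⟨y, hy, hFy⟩ := hIVT hc
  exact ⟨y, ⟨lt_of_lt_of_le hεIoc.1 hy.1.le, lt_trans hy.2 hδIco.2⟩, hFy⟩


noncomputable def hh (t : ℝ) : ℝ := Classical.choose (F_surj t)

lemma hh_mem (t : ℝ) : hh t ∈ Set.Ioo (0:ℝ) 1 := (Classical.choose_spec (F_surj t)).1

lemma F_hh (t : ℝ) : F (hh t) = t := (Classical.choose_spec (F_surj t)).2

lemma hh_F {y : ℝ} (hy : y ∈ Set.Ioo (0:ℝ) 1) : hh (F y) = y :=
  F_strictMono.injOn (hh_mem _) hy (F_hh (F y))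

lemma hh_strictMono : StrictMono hh := by
  intro s t hst
  by_contra h
  push_neg at h
  have := F_strictMono.monotoneOn (hh_mem t) (hh_mem s) h
  rw [F_hh, F_hh] at this
  linarith

lemma hh_range : Set.range hh = Set.Ioo (0:ℝ) 1 := by
  ext y
  constructor
  · rintro ⟨t, rfl⟩; exact hh_mem t
  · intro hy; exact ⟨F y, hh_F hy⟩

lemma hh_cont (t : ℝ) : ContinuousAt hh t := by
  apply StrictMonoOn.continuousAt_of_image_mem_nhds (s := Set.univ)
    (hh_strictMono.strictMonoOn _) Filter.univ_mem
  rw [Set.image_univ, hh_range]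
  exact Ioo_mem_nhds (hh_mem t).1 (hh_mem t).2

lemma ff_inv (y : ℝ) : (ff y)⁻¹ = 2 * Real.pi * Af y := by
  have hπ := Real.pi_pos
  have he := Real.exp_pos ((Real.sin (Real.pi * y) ^ 2)⁻¹)
  rw [ff, Af, Real.exp_neg]
  field_simp

lemma hh_hasDerivAt (t : ℝ) : HasDerivAt hh (2 * Real.pi * Af (hh t)) t := by
  rw [← ff_inv]
  apply HasDerivAt.of_local_left_inverse (hh_cont t) (F_hasDerivAt (hh_mem t))
    (ne_of_gt (ff_pos _))
  exact Filter.Eventually.of_forall F_hh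

noncomputable def gam (t : ℝ) : ℝ × ℝ := (-Real.log (hh t), hh t)

lemma gam_hasDerivAt (t : ℝ) : HasDerivAt gam (qfield (gam t)) t := by
  have hy := hh_mem t
  have hy0 : hh t ≠ 0 := ne_of_gt hy.1
  have h1 := hh_hasDerivAt t
  have h2 : HasDerivAt (fun t => Real.log (hh t)) ((hh t)⁻¹ * (2 * Real.pi * Af (hh t))) t :=
    (Real.hasDerivAt_log hy0).comp t h1
  have h3 := (h2.neg).prodMk h1
  have hq : qfield (gam t) = (-((hh t)⁻¹ * (2 * Real.pi * Af (hh t))), 2 * Real.pi * Af (hh t)) := by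
    rw [gam, qfield_on_graph hy (by ring)]
    ext <;> simp <;> ring
  rw [hq]
  exact h3

lemma gam_image : gam '' Set.univ = G := by
  rw [Set.image_univ]
  ext ⟨x, y⟩
  constructor
  · rintro ⟨t, ht⟩
    obtain ⟨hx, hy⟩ := Prod.mk.injEq .. ▸ ht
    have hmem := hh_mem t
    rw [gam] at ht
    have hx : x = -Real.log (hh t) := (congrArg Prod.fst ht).symm
    have hy : y = hh t := (congrArg Prod.snd ht).symm
    refine ⟨x, ?_, ?_⟩
    · rw [hx, Set.mem_Ioi, neg_pos]
      exact Real.log_neg hmem.1 hmem.2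
    · rw [hx, hy]
      show (-Real.log (hh t), Real.exp (-(-Real.log (hh t)))) = (-Real.log (hh t), hh t)
      rw [neg_neg, Real.exp_log hmem.1]
  · rintro ⟨x', hx', hxx'⟩
    have hx1 : x = x' := (congrArg Prod.fst hxx').symm
    have hy1 : y = Real.exp (-x') := (congrArg Prod.snd hxx').symm
    have hyI : Real.exp (-x') ∈ Set.Ioo (0:ℝ) 1 := by
      constructor
      · exact Real.exp_pos _
      · exact Real.exp_lt_one_iff.2 (by simpa using hx')
    refine ⟨F (Real.exp (-x')), ?_⟩
    rw [gam, hh_F hyI, Real.log_exp, neg_neg, hx1, hy1]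

/-- The set G is a trajectory of q = ∇⊥φ, it is unbounded, and it is
not invariant under translation by any nonzero vector: q has an unbounded trajectory
that is not periodic. -/
theorem graph_is_unbounded_nonperiodic_trajectory :
    (∃ (γ : ℝ → ℝ × ℝ) (I : Set ℝ), IsOpen I ∧ I.OrdConnected ∧
      (∀ t ∈ I, HasDerivAt γ (qfield (γ t)) t) ∧ γ '' I = G) ∧
    ¬ Bornology.IsBounded G ∧
    (∀ v : ℝ × ℝ, v ≠ 0 → (fun z : ℝ × ℝ => z + v) '' G ≠ G) := by
  refine ⟨⟨gam, Set.univ, isOpen_univ, Set.ordConnected_univ,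
    fun t _ => gam_hasDerivAt t, gam_image⟩, G_unbounded, G_nonperiodic⟩
end

section
/- Let φ : ℝ² → ℝ be defined by φ(x,y) = exp(−1/sin²(πy)) · sin(2π(x + ln(y − ⌊y⌋))) for y ∉ ℤ and φ(x,y) = 0 for y ∈ ℤ, and let q = ∇⊥φ = (−∂φ/∂y, ∂φ/∂x). Then q has no unbounded periodic trajectory: there is no differentiable curve γ : I → ℝ² on an open interval with γ'(t) = q(γ(t)) for all t, whose range T = γ(I) is unbounded and satisfies T + k = T for some nonzero k ∈ ℤ². -/
open Real
open scoped Classical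

lemma ne_int_of_mem_Ioo {n m : ℤ} {y : ℝ} (hy : y ∈ Set.Ioo (n : ℝ) ((n : ℝ) + 1)) :
    y ≠ (m : ℝ) := by
  rintro rfl
  obtain ⟨h1, h2⟩ := hy
  have h1' : n < m := by exact_mod_cast h1
  have h2' : (m : ℝ) < ((n + 1 : ℤ) : ℝ) := by push_cast; linarith
  have : m < n + 1 := by exact_mod_cast h2'
  omega

lemma phi_eq_strip (n : ℤ) {z : ℝ × ℝ} (hz : z.2 ∈ Set.Ioo (n : ℝ) ((n : ℝ) + 1)) :
    phi z = Real.exp (-(1 / Real.sin (Real.pi * z.2) ^ 2)) *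
      Real.sin (2 * Real.pi * (z.1 + Real.log (z.2 - n))) := by
  have hni : ¬∃ m : ℤ, z.2 = (m : ℝ) := by
    rintro ⟨m, hm⟩; exact ne_int_of_mem_Ioo hz hm
  have hfl : (⌊z.2⌋ : ℤ) = n := by
    rw [Int.floor_eq_iff]
    · exact ⟨hz.1.le, by exact_mod_cast hz.2⟩
  rw [phi, if_neg hni, hfl]

lemma phi_int {z : ℝ × ℝ} (m : ℤ) (h : z.2 = (m : ℝ)) : phi z = 0 := by
  rw [phi, if_pos ⟨m, h⟩]

lemma exp_neg_inv_le {a : ℝ} (ha : 0 < a) : Real.exp (-(1 / a)) ≤ a := by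
  have h1 : 1 / a ≤ Real.exp (1 / a) := by
    have := Real.add_one_le_exp (1 / a)
    linarith
  have h2 : (0:ℝ) < 1 / a := by positivity
  rw [Real.exp_neg]
  rw [inv_le_comm₀ (Real.exp_pos _) ha] at *
  calc a⁻¹ = 1 / a := (one_div a).symm
    _ ≤ Real.exp (1/a) := h1

lemma sin_pi_sq_le (m : ℤ) (y : ℝ) :
    Real.sin (Real.pi * y) ^ 2 ≤ Real.pi ^ 2 * (y - m) ^ 2 := by
  have h : Real.sin (Real.pi * y) = (-1) ^ m * Real.sin (Real.pi * (y - m)) := by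
    rw [show Real.pi * y = Real.pi * (y - m) + m * Real.pi by ring,
      Real.sin_add_int_mul_pi]
  rw [h]
  have h2 : Real.sin (Real.pi * (y - m)) ^ 2 ≤ (Real.pi * (y - m)) ^ 2 := Real.sin_sq_le_sq
  calc ((-1:ℝ) ^ m * Real.sin (Real.pi * (y - m))) ^ 2
      = Real.sin (Real.pi * (y - m)) ^ 2 := by
        have : |(-1:ℝ) ^ m| = 1 := by
          rcases Int.even_or_odd m with he | ho
          · rw [he.neg_one_zpow]; norm_num
          · rw [ho.neg_one_zpow]; norm_num
        rw [mul_pow, ← sq_abs ((-1:ℝ)^m), this]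
        norm_num
    _ ≤ (Real.pi * (y - m)) ^ 2 := h2
    _ = Real.pi ^ 2 * (y - m) ^ 2 := by ring

lemma abs_phi_le (m : ℤ) (z : ℝ × ℝ) : |phi z| ≤ Real.pi ^ 2 * (z.2 - m) ^ 2 := by
  by_cases hi : ∃ j : ℤ, z.2 = (j : ℝ)
  · obtain ⟨j, hj⟩ := hi
    rw [phi_int j hj, abs_zero]
    positivity
  · rw [phi, if_neg hi]
    have hs : Real.sin (Real.pi * z.2) ≠ 0 := by
      intro h
      obtain ⟨j, hj⟩ := Real.sin_eq_zero_iff.mp h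
      exact hi ⟨j, mul_left_cancel₀ Real.pi_ne_zero (by linarith [hj])⟩
    have h1 : |Real.exp (-(1 / Real.sin (Real.pi * z.2) ^ 2)) *
        Real.sin (2 * Real.pi * (z.1 + Real.log (z.2 - ⌊z.2⌋)))| ≤
        Real.exp (-(1 / Real.sin (Real.pi * z.2) ^ 2)) := by
      rw [abs_mul, abs_of_pos (Real.exp_pos _)]
      nlinarith [Real.abs_sin_le_one (2 * Real.pi * (z.1 + Real.log (z.2 - ⌊z.2⌋))),
        Real.exp_pos (-(1 / Real.sin (Real.pi * z.2) ^ 2)),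
        abs_nonneg (Real.sin (2 * Real.pi * (z.1 + Real.log (z.2 - ⌊z.2⌋))))]
    refine h1.trans ?_
    have h2 : Real.exp (-(1 / Real.sin (Real.pi * z.2) ^ 2)) ≤
        Real.sin (Real.pi * z.2) ^ 2 :=
      exp_neg_inv_le (by positivity)
    exact h2.trans (sin_pi_sq_le m z.2)

lemma phi_hasFDerivAt_int {z : ℝ × ℝ} (m : ℤ) (h : z.2 = (m : ℝ)) :
    HasFDerivAt phi (0 : ℝ × ℝ →L[ℝ] ℝ) z := by
  rw [hasFDerivAt_iff_isLittleO_nhds_zero]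
  rw [Asymptotics.isLittleO_iff]
  intro ε hε
  have hball : Metric.ball (0 : ℝ × ℝ) (ε / Real.pi ^ 2 + 1 - 1) ∈ nhds (0 : ℝ × ℝ) := by
    apply Metric.ball_mem_nhds
    have : (0:ℝ) < ε / Real.pi ^ 2 := by positivity
    linarith
  filter_upwards [Metric.ball_mem_nhds (0 : ℝ × ℝ) (show (0:ℝ) < ε / Real.pi ^ 2 by positivity)]
    with w hw
  simp only [ContinuousLinearMap.zero_apply, sub_zero, add_zero]
  rw [show phi z = 0 from phi_int m h, sub_zero]
  have h1 : |phi (z + w)| ≤ Real.pi ^ 2 * ((z + w).2 - m) ^ 2 := abs_phi_le m _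
  have h2 : (z + w).2 - m = w.2 := by simp [h]
  rw [h2] at h1
  have h3 : |w.2| ≤ ‖w‖ := by
    calc |w.2| = ‖w.2‖ := rfl
      _ ≤ ‖w‖ := norm_snd_le w
  have h4 : ‖w‖ < ε / Real.pi ^ 2 := by simpa [Metric.mem_ball] using hw
  calc ‖phi (z + w)‖ = |phi (z + w)| := rfl
    _ ≤ Real.pi ^ 2 * w.2 ^ 2 := h1
    _ ≤ Real.pi ^ 2 * (‖w‖ * ‖w‖) := by
        have hsq : w.2 ^ 2 ≤ ‖w‖ * ‖w‖ := by
          have hm := mul_le_mul h3 h3 (abs_nonneg w.2) (norm_nonneg w)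
          nlinarith [sq_abs w.2]
        exact mul_le_mul_of_nonneg_left hsq (by positivity)
    _ ≤ ε * ‖w‖ := by
        have h5 : ‖w‖ * Real.pi ^ 2 < ε := (lt_div_iff₀ (by positivity)).mp h4
        nlinarith [norm_nonneg w]

noncomputable def Phi (n : ℤ) (w : ℝ × ℝ) : ℝ :=
  Real.exp (-(1 / Real.sin (Real.pi * w.2) ^ 2)) *
    Real.sin (2 * Real.pi * (w.1 + Real.log (w.2 - n)))

lemma sin_pi_ne {n : ℤ} {y : ℝ} (hy : y ∈ Set.Ioo (n : ℝ) ((n : ℝ) + 1)) :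
    Real.sin (Real.pi * y) ≠ 0 := by
  intro h
  obtain ⟨j, hj⟩ := Real.sin_eq_zero_iff.mp h
  exact ne_int_of_mem_Ioo hy (mul_left_cancel₀ Real.pi_ne_zero (by linarith [hj]))

lemma phi_eventuallyEq_strip (n : ℤ) {z : ℝ × ℝ} (hz : z.2 ∈ Set.Ioo (n : ℝ) ((n : ℝ) + 1)) :
    phi =ᶠ[nhds z] Phi n := by
  have hU : Prod.snd ⁻¹' Set.Ioo (n : ℝ) ((n : ℝ) + 1) ∈ nhds z :=
    (isOpen_Ioo.preimage continuous_snd).mem_nhds hz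
  exact Filter.eventuallyEq_of_mem hU fun w hw => phi_eq_strip n hw

lemma Phi_differentiableAt (n : ℤ) {z : ℝ × ℝ} (hz : z.2 ∈ Set.Ioo (n : ℝ) ((n : ℝ) + 1)) :
    DifferentiableAt ℝ (Phi n) z := by
  have hs : Real.sin (Real.pi * z.2) ≠ 0 := sin_pi_ne hz
  have hy : z.2 - (n : ℝ) ≠ 0 := by have := hz.1; intro h; linarith [sub_eq_zero.mp h]
  have d1 : DifferentiableAt ℝ (fun w : ℝ × ℝ => Real.sin (Real.pi * w.2)) z :=
    (differentiableAt_snd.const_mul Real.pi).sin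
  have d1sq : DifferentiableAt ℝ (fun w : ℝ × ℝ => Real.sin (Real.pi * w.2) ^ 2) z :=
    d1.pow 2
  have d2 : DifferentiableAt ℝ
      (fun w : ℝ × ℝ => -(1 / Real.sin (Real.pi * w.2) ^ 2)) z :=
    by simp only [one_div]; exact (d1sq.inv (pow_ne_zero 2 hs)).neg
  have d4 : DifferentiableAt ℝ (fun w : ℝ × ℝ => Real.log (w.2 - n)) z :=
    (differentiableAt_snd.sub_const (n : ℝ)).log hy
  exact d2.exp.mul (((differentiableAt_fst.add d4).const_mul (2 * Real.pi)).sin)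

lemma phi_differentiableAt_strip (n : ℤ) {z : ℝ × ℝ}
    (hz : z.2 ∈ Set.Ioo (n : ℝ) ((n : ℝ) + 1)) : DifferentiableAt ℝ phi z :=
  (Filter.EventuallyEq.differentiableAt_iff (phi_eventuallyEq_strip n hz)).mpr
    (Phi_differentiableAt n hz)

lemma phi_fderiv_x (n : ℤ) {z : ℝ × ℝ} (hz : z.2 ∈ Set.Ioo (n : ℝ) ((n : ℝ) + 1)) :
    fderiv ℝ phi z (1, 0) = Real.exp (-(1 / Real.sin (Real.pi * z.2) ^ 2)) *
      (Real.cos (2 * Real.pi * (z.1 + Real.log (z.2 - n))) * (2 * Real.pi)) := by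
  have hev := phi_eventuallyEq_strip n hz
  have hd := Phi_differentiableAt n hz
  have hfd : fderiv ℝ phi z = fderiv ℝ (Phi n) z := hev.fderiv_eq
  rw [hfd]
  -- derivative of x ↦ Phi n (x, z.2) via composition
  have hline : HasDerivAt (fun x : ℝ => ((x, z.2) : ℝ × ℝ)) ((1 : ℝ), (0 : ℝ)) z.1 :=
    (hasDerivAt_id z.1).prodMk (hasDerivAt_const z.1 z.2)
  have hcomp : HasDerivAt (fun x : ℝ => Phi n (x, z.2)) (fderiv ℝ (Phi n) z (1, 0)) z.1 := by
    have h := HasFDerivAt.comp_hasDerivAt z.1 (by rw [show ((z.1, z.2) : ℝ × ℝ) = z from rfl]; exact hd.hasFDerivAt) hline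
    exact h
  -- direct computation
  set C := Real.exp (-(1 / Real.sin (Real.pi * z.2) ^ 2)) with hC
  set L := Real.log (z.2 - n) with hL
  have hinner : HasDerivAt (fun x : ℝ => 2 * Real.pi * (x + L)) (2 * Real.pi) z.1 := by
    have := ((hasDerivAt_id z.1).add_const L).const_mul (2 * Real.pi)
    simpa using this
  have hsin : HasDerivAt (fun x : ℝ => Real.sin (2 * Real.pi * (x + L)))
      (Real.cos (2 * Real.pi * (z.1 + L)) * (2 * Real.pi)) z.1 :=
    by have := (Real.hasDerivAt_sin (2 * Real.pi * (z.1 + L))).comp z.1 hinner; exact this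
  have hdirect : HasDerivAt (fun x : ℝ => Phi n (x, z.2))
      (C * (Real.cos (2 * Real.pi * (z.1 + L)) * (2 * Real.pi))) z.1 := by
    have := hsin.const_mul C
    simpa [Phi, hC, hL] using this
  exact hcomp.unique hdirect

lemma phi_fderiv_x_abs_le (m : ℤ) (z : ℝ × ℝ) :
    |fderiv ℝ phi z (1, 0)| ≤ Real.pi ^ 3 * |z.2 - m| := by
  by_cases hi : ∃ j : ℤ, z.2 = (j : ℝ)
  · obtain ⟨j, hj⟩ := hi
    rw [(phi_hasFDerivAt_int j hj).fderiv]
    simp only [ContinuousLinearMap.zero_apply, abs_zero]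
    positivity
  · set n := ⌊z.2⌋ with hn
    have hz : z.2 ∈ Set.Ioo (n : ℝ) ((n : ℝ) + 1) := by
      constructor
      · rcases lt_or_eq_of_le (Int.floor_le z.2) with h | h
        · exact h
        · exact absurd ⟨n, h.symm⟩ hi
      · exact Int.lt_floor_add_one z.2
    rw [phi_fderiv_x n hz]
    set E := Real.exp (-(1 / Real.sin (Real.pi * z.2) ^ 2)) with hE
    have hE0 : 0 < E := Real.exp_pos _
    have hE1 : E ≤ 1 := by
      rw [hE]
      apply Real.exp_le_one_iff.mpr
      have : Real.sin (Real.pi * z.2) ≠ 0 := sin_pi_ne hz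
      have h2 : (0:ℝ) < Real.sin (Real.pi * z.2) ^ 2 := by positivity
      have : (0:ℝ) < 1 / Real.sin (Real.pi * z.2) ^ 2 := by positivity
      linarith
    have hEd : E ≤ Real.pi ^ 2 * (z.2 - m) ^ 2 := by
      have h2 : (0:ℝ) < Real.sin (Real.pi * z.2) ^ 2 := by
        have : Real.sin (Real.pi * z.2) ≠ 0 := sin_pi_ne hz
        positivity
      exact (exp_neg_inv_le h2).trans (sin_pi_sq_le m z.2)
    have habs : |E * (Real.cos (2 * Real.pi * (z.1 + Real.log (z.2 - n))) * (2 * Real.pi))| ≤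
        2 * Real.pi * E := by
      rw [abs_mul, abs_mul, abs_of_pos hE0, abs_of_pos (by positivity : (0:ℝ) < 2 * Real.pi)]
      have h1 : |Real.cos (2 * Real.pi * (z.1 + Real.log (z.2 - n)))| * (2 * Real.pi) ≤
          1 * (2 * Real.pi) :=
        mul_le_mul_of_nonneg_right (Real.abs_cos_le_one _) (by positivity)
      calc E * (|Real.cos (2 * Real.pi * (z.1 + Real.log (z.2 - n)))| * (2 * Real.pi))
          ≤ E * (1 * (2 * Real.pi)) := mul_le_mul_of_nonneg_left h1 hE0.le
        _ = 2 * Real.pi * E := by ring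
    refine habs.trans ?_
    set d := |z.2 - m| with hd
    have hd0 : 0 ≤ d := abs_nonneg _
    have hdsq : (z.2 - m) ^ 2 = d ^ 2 := (sq_abs _).symm
    have hpi3 : (3:ℝ) < Real.pi := Real.pi_gt_three
    rcases le_or_gt d (1/2) with hcase | hcase
    · have h5 : E ≤ Real.pi ^ 2 * d ^ 2 := by rw [← hdsq]; exact hEd
      have h6 : 2 * d ^ 2 ≤ d := by nlinarith
      calc 2 * Real.pi * E ≤ 2 * Real.pi * (Real.pi ^ 2 * d ^ 2) :=
            mul_le_mul_of_nonneg_left h5 (by positivity)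
        _ = Real.pi ^ 3 * (2 * d ^ 2) := by ring
        _ ≤ Real.pi ^ 3 * d := mul_le_mul_of_nonneg_left h6 (by positivity)
    · have hp2 : (9:ℝ) < Real.pi ^ 2 := by nlinarith
      have h7 : 2 * Real.pi ≤ Real.pi ^ 3 * (1/2) := by
        nlinarith [mul_pos Real.pi_pos (by linarith : (0:ℝ) < Real.pi ^ 2 - 9)]
      have h8 : Real.pi ^ 3 * (1/2) ≤ Real.pi ^ 3 * d :=
        mul_le_mul_of_nonneg_left hcase.le (by positivity)
      nlinarith [Real.pi_pos, mul_nonneg (by positivity : (0:ℝ) ≤ 2 * Real.pi) (by linarith : (0:ℝ) ≤ 1 - E)]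

lemma fderiv_phi_apply_qfield (z : ℝ × ℝ) : fderiv ℝ phi z (qfield z) = 0 := by
  set D := fderiv ℝ phi z with hD
  have h : qfield z = (-(D (0, 1))) • ((1:ℝ), (0:ℝ)) + (D (1, 0)) • ((0:ℝ), (1:ℝ)) := by
    simp [qfield, Prod.ext_iff, hD]
  rw [h, map_add, map_smul, map_smul, smul_eq_mul, smul_eq_mul]
  ring

lemma eq_zero_of_deriv_bound_aux {f f' : ℝ → ℝ} {I : Set ℝ}
    (hI' : Set.OrdConnected I) {K : ℝ}
    (hf : ∀ t ∈ I, HasDerivAt f (f' t) t) (hb : ∀ t ∈ I, |f' t| ≤ K * |f t|)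
    {t0 t1 : ℝ} (h0 : t0 ∈ I) (h1 : t1 ∈ I) (hle : t0 ≤ t1) (hz : f t0 = 0) :
    f t1 = 0 := by
  have hsub : Set.Icc t0 t1 ⊆ I := hI'.out h0 h1
  have hcont : ContinuousOn f (Set.Icc t0 t1) := fun t ht =>
    ((hf t (hsub ht)).continuousAt).continuousWithinAt
  have hderiv : ∀ t ∈ Set.Ico t0 t1, HasDerivWithinAt f (f' t) (Set.Ici t) t := fun t ht =>
    (hf t (hsub (Set.Ico_subset_Icc_self ht))).hasDerivWithinAt
  have hbound : ∀ t ∈ Set.Ico t0 t1, ‖f' t‖ ≤ K * ‖f t‖ + 0 := fun t ht => by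
    rw [Real.norm_eq_abs, Real.norm_eq_abs, add_zero]
    exact hb t (hsub (Set.Ico_subset_Icc_self ht))
  have ha : ‖f t0‖ ≤ 0 := by rw [hz]; simp
  have := norm_le_gronwallBound_of_norm_deriv_right_le hcont hderiv ha hbound t1
    ⟨hle, le_rfl⟩
  rw [gronwallBound_ε0_δ0] at this
  exact norm_le_zero_iff.mp this

lemma eq_zero_of_deriv_bound {f f' : ℝ → ℝ} {I : Set ℝ}
    (hI' : Set.OrdConnected I) {K : ℝ}
    (hf : ∀ t ∈ I, HasDerivAt f (f' t) t) (hb : ∀ t ∈ I, |f' t| ≤ K * |f t|)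
    {t0 t1 : ℝ} (h0 : t0 ∈ I) (h1 : t1 ∈ I) (hz : f t0 = 0) :
    f t1 = 0 := by
  rcases le_total t0 t1 with hle | hle
  · exact eq_zero_of_deriv_bound_aux hI' hf hb h0 h1 hle hz
  · -- reflect
    set c := t0 + t1 with hc
    set g : ℝ → ℝ := fun s => f (c - s) with hg
    set g' : ℝ → ℝ := fun s => -f' (c - s) with hg'
    set J : Set ℝ := (fun s => c - s) ⁻¹' I with hJ
    have hJoc : Set.OrdConnected J := by
      constructor
      intro x hx y hy w hw
      have : c - w ∈ Set.Icc (c - y) (c - x) := ⟨by linarith [hw.2], by linarith [hw.1]⟩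
      exact hI'.out hy hx this
    have hgf : ∀ s ∈ J, HasDerivAt g (g' s) s := by
      intro s hs
      have haff : HasDerivAt (fun s : ℝ => c - s) (-1) s := by
        simpa using (hasDerivAt_id s).const_sub c
      have := (hf (c - s) hs).comp s haff
      simpa [hg, hg', Function.comp_def] using this
    have hgb : ∀ s ∈ J, |g' s| ≤ K * |g s| := by
      intro s hs
      simp only [hg, hg', abs_neg]
      exact hb (c - s) hs
    have h0' : t1 ∈ J := by simp [hJ, hc, h0]
    have h1' : t0 ∈ J := by simp [hJ, hc, h1]
    have hz' : g t1 = 0 := by simp [hg, hc]; simpa using hz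
    have := eq_zero_of_deriv_bound_aux hJoc hgf hgb h0' h1' hle hz'
    simpa [hg, hc] using this

lemma abs_sin_pi_shift (m : ℤ) (y : ℝ) :
    |Real.sin (Real.pi * y)| = |Real.sin (Real.pi * (y - m))| := by
  rw [show Real.pi * y = Real.pi * (y - m) + m * Real.pi by ring,
    Real.sin_add_int_mul_pi, abs_mul, abs_neg_one_zpow, one_mul]

lemma mem_uIcc_minmax {a b x : ℝ} (h1 : min a b ≤ x) (h2 : x ≤ max a b) :
    x ∈ Set.uIcc a b := by
  rcases le_total a b with h | h
  · exact Set.mem_uIcc.mpr (Or.inl ⟨by rwa [min_eq_left h] at h1, by rwa [max_eq_right h] at h2⟩)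
  · exact Set.mem_uIcc.mpr (Or.inr ⟨by rwa [min_eq_right h] at h1, by rwa [max_eq_left h] at h2⟩)


/-- The vector field q = ∇⊥φ has no unbounded periodic trajectory:
no trajectory of q is both unbounded and invariant under translation by a nonzero
vector of ℤ². -/
theorem no_unbounded_periodic_trajectory :
    ¬ ∃ (γ : ℝ → ℝ × ℝ) (I : Set ℝ) (k : ℤ × ℤ),
      IsOpen I ∧ I.OrdConnected ∧
      (∀ t ∈ I, HasDerivAt γ (qfield (γ t)) t) ∧
      ¬ Bornology.IsBounded (γ '' I) ∧
      k ≠ 0 ∧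
      (fun z : ℝ × ℝ => z + ((k.1 : ℝ), (k.2 : ℝ))) '' (γ '' I) = γ '' I := by
  rintro ⟨γ, I, k, hIopen, hIoc, hode, hunb, hk0, hkinv⟩
  have hγc : ∀ t ∈ I, ContinuousAt γ t := fun t ht => (hode t ht).continuousAt
  have hy' : ∀ t ∈ I, HasDerivAt (fun s => (γ s).2) (fderiv ℝ phi (γ t) (1, 0)) t := by
    intro t ht
    have h2 := ((ContinuousLinearMap.snd ℝ ℝ ℝ).hasFDerivAt).comp_hasDerivAt t (hode t ht)
    simpa [qfield, Function.comp_def] using h2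
  have hx' : ∀ t ∈ I, HasDerivAt (fun s => (γ s).1) (-(fderiv ℝ phi (γ t) (0, 1))) t := by
    intro t ht
    have h2 := ((ContinuousLinearMap.fst ℝ ℝ ℝ).hasFDerivAt).comp_hasDerivAt t (hode t ht)
    simpa [qfield, Function.comp_def] using h2
  have hSne : (γ '' I).Nonempty := by
    rcases Set.eq_empty_or_nonempty (γ '' I) with h | h
    · rw [h] at hunb; exact absurd Bornology.isBounded_empty hunb
    · exact h
  obtain ⟨z0, t0, ht0, hz0⟩ := hSne
  by_cases hcross : ∃ ta ∈ I, ∃ m : ℤ, (γ ta).2 = (m : ℝ)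
  · -- trajectory touches an integer line: it is a single point
    obtain ⟨ta, hta, m, hm⟩ := hcross
    have hyconst : ∀ s ∈ I, (γ s).2 = (m : ℝ) := by
      intro s hs
      have h := eq_zero_of_deriv_bound (f := fun s => (γ s).2 - m)
        (f' := fun s => fderiv ℝ phi (γ s) (1, 0)) hIoc
        (fun t ht => (hy' t ht).sub_const (m : ℝ))
        (fun t ht => by simpa using phi_fderiv_x_abs_le m (γ t))
        hta hs (by show (γ ta).2 - (m:ℝ) = 0; rw [hm, sub_self])
      have h' : (γ s).2 - (m:ℝ) = 0 := h
      linarith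
    have hfz : ∀ s ∈ I, fderiv ℝ phi (γ s) = 0 := fun s hs =>
      (phi_hasFDerivAt_int m (hyconst s hs)).fderiv
    have hxconst : ∀ s ∈ I, (γ s).1 = (γ ta).1 := by
      intro s hs
      have h := eq_zero_of_deriv_bound (f := fun s => (γ s).1 - (γ ta).1)
        (f' := fun s => -(fderiv ℝ phi (γ s) (0, 1))) (K := 0) hIoc
        (fun t ht => (hx' t ht).sub_const _)
        (fun t ht => by
          show |-(fderiv ℝ phi (γ t)) (0, 1)| ≤ 0 * |(γ t).1 - (γ ta).1|
          rw [hfz t ht]; simp)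
        hta hs (by show (γ ta).1 - (γ ta).1 = 0; rw [sub_self])
      have h' : (γ s).1 - (γ ta).1 = 0 := h
      linarith
    apply hunb
    apply Bornology.IsBounded.subset (Bornology.isBounded_singleton (x := γ ta))
    rintro z ⟨s, hs, rfl⟩
    have : γ s = γ ta := Prod.ext (hxconst s hs)
      (by rw [hyconst s hs, hyconst ta hta])
    simp [this]
  · push_neg at hcross
    set n := ⌊(γ t0).2⌋ with hn
    have ht0strip : (γ t0).2 ∈ Set.Ioo (n : ℝ) ((n : ℝ) + 1) := by
      constructor
      · rcases lt_or_eq_of_le (Int.floor_le (γ t0).2) with h | h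
        · exact h
        · exact absurd h.symm (hcross t0 ht0 n)
      · exact Int.lt_floor_add_one _
    have hstrip : ∀ t ∈ I, (γ t).2 ∈ Set.Ioo (n : ℝ) ((n : ℝ) + 1) := by
      intro t ht
      have hsubI : Set.uIcc t0 t ⊆ I := hIoc.uIcc_subset ht0 ht
      have hcont : ContinuousOn (fun s => (γ s).2) (Set.uIcc t0 t) := fun s hs =>
        (continuous_snd.continuousAt.comp (hγc s (hsubI hs))).continuousWithinAt
      have hIVT := intermediate_value_uIcc hcont
      constructor
      · by_contra hle
        push_neg at hle
        have hlt : (γ t).2 < (n : ℝ) := lt_of_le_of_ne hle (hcross t ht n)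
        have hmem : (n : ℝ) ∈ Set.uIcc ((γ t0).2) ((γ t).2) :=
          Set.mem_uIcc.mpr (Or.inr ⟨hlt.le, ht0strip.1.le⟩)
        obtain ⟨s, hs, hseq⟩ := hIVT hmem
        exact hcross s (hsubI hs) n hseq
      · by_contra hge
        push_neg at hge
        have hmem : ((n : ℝ) + 1) ∈ Set.uIcc ((γ t0).2) ((γ t).2) :=
          Set.mem_uIcc.mpr (Or.inl ⟨ht0strip.2.le, hge⟩)
        obtain ⟨s, hs, hseq⟩ := hIVT hmem
        refine hcross s (hsubI hs) (n + 1) ?_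
        push_cast
        exact hseq
    have hshift : ∀ z ∈ γ '' I, z + ((k.1 : ℝ), (k.2 : ℝ)) ∈ γ '' I := by
      intro z hz
      rw [← hkinv]
      exact ⟨z, hz, rfl⟩
    obtain ⟨t1, ht1, heq⟩ := hshift (γ t0) ⟨t0, ht0, rfl⟩
    have hy1 : (γ t1).2 = (γ t0).2 + (k.2 : ℝ) := by rw [heq]; simp
    have hx1 : (γ t1).1 = (γ t0).1 + (k.1 : ℝ) := by rw [heq]; simp
    have hk2 : k.2 = 0 := by
      have hA := hstrip t1 ht1
      have hB := ht0strip
      rw [hy1] at hA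
      have habs : |(k.2 : ℝ)| < 1 := by
        rw [abs_lt]
        constructor <;> [linarith [hA.1, hB.2]; linarith [hA.2, hB.1]]
      have : |k.2| < 1 := by exact_mod_cast (by rwa [← Int.cast_abs] at habs : ((|k.2| : ℤ) : ℝ) < 1)
      exact Int.abs_lt_one_iff.mp this
    set c := phi (γ t0) with hc
    have hphiconst : ∀ t ∈ I, phi (γ t) = c := by
      intro t ht
      have hf : ∀ s ∈ I, HasDerivAt (fun s => phi (γ s) - c) ((fun _ => (0:ℝ)) s) s := by
        intro s hs
        have hd : HasDerivAt (fun s => phi (γ s)) (fderiv ℝ phi (γ s) (qfield (γ s))) s :=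
          ((phi_differentiableAt_strip n (hstrip s hs)).hasFDerivAt).comp_hasDerivAt s
            (hode s hs)
        rw [fderiv_phi_apply_qfield] at hd
        exact hd.sub_const c
      have hb : ∀ s ∈ I, |(fun _ => (0:ℝ)) s| ≤ (0:ℝ) * |phi (γ s) - c| := by
        intro s hs; simp
      have h := eq_zero_of_deriv_bound hIoc hf hb ht0 ht
        (by show phi (γ t0) - c = 0; rw [← hc, sub_self])
      have h' : phi (γ t) - c = 0 := h
      linarith
    have hypos : ∀ t ∈ I, (0 : ℝ) < (γ t).2 - n := fun t ht => sub_pos.mpr (hstrip t ht).1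
    set u : ℝ → ℝ := fun t => (γ t).1 + Real.log ((γ t).2 - n) with hu
    have hucont : ∀ t ∈ I, ContinuousAt u t := by
      intro t ht
      have h1 : ContinuousAt (fun s => (γ s).1) t := continuous_fst.continuousAt.comp (hγc t ht)
      have h2 : ContinuousAt (fun s => (γ s).2 - (n : ℝ)) t :=
        (continuous_snd.continuousAt.comp (hγc t ht)).sub continuousAt_const
      exact h1.add (h2.log (ne_of_gt (hypos t ht)))
    have hphieq : ∀ t ∈ I, phi (γ t) =
        Real.exp (-(1 / Real.sin (Real.pi * (γ t).2) ^ 2)) * Real.sin (2 * Real.pi * u t) :=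
      fun t ht => phi_eq_strip n (hstrip t ht)
    by_cases hc0 : c = 0
    · -- zero level set: trajectory lies on one logarithmic graph
      have hsin0 : ∀ t ∈ I, Real.sin (2 * Real.pi * u t) = 0 := by
        intro t ht
        have h := hphieq t ht
        rw [hphiconst t ht, hc0] at h
        rcases mul_eq_zero.mp h.symm with h' | h'
        · exact absurd h' (Real.exp_ne_zero _)
        · exact h'
      have hhalf : ∀ t ∈ I, ∃ j : ℤ, u t = j / 2 := by
        intro t ht
        obtain ⟨j, hj⟩ := Real.sin_eq_zero_iff.mp (hsin0 t ht)
        refine ⟨j, ?_⟩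
        have h2 : Real.pi * (j : ℝ) = Real.pi * (2 * u t) := by linarith [hj]
        have h3 := mul_left_cancel₀ Real.pi_ne_zero h2
        rw [eq_div_iff (by norm_num : (2:ℝ) ≠ 0)]
        linarith
      have huconst : ∀ t ∈ I, u t = u t0 := by
        intro t ht
        by_contra hne
        have hsubI : Set.uIcc t0 t ⊆ I := hIoc.uIcc_subset ht0 ht
        have hcont : ContinuousOn u (Set.uIcc t0 t) := fun s hs =>
          (hucont s (hsubI hs)).continuousWithinAt
        have hminmax : min (u t0) (u t) < max (u t0) (u t) :=
          min_lt_max.mpr (fun h => hne h.symm)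
        obtain ⟨r, hirr, hr1, hr2⟩ := exists_irrational_btwn hminmax
        have hrmem : r ∈ Set.uIcc (u t0) (u t) := mem_uIcc_minmax hr1.le hr2.le
        obtain ⟨s, hs, hseq⟩ := intermediate_value_uIcc hcont hrmem
        obtain ⟨j, hj⟩ := hhalf s (hsubI hs)
        apply hirr
        exact ⟨(j : ℚ) / 2, by push_cast; rw [← hj]; exact hseq⟩
      have hk1 : k.1 ≠ 0 := fun h => hk0 (Prod.ext h hk2)
      have hu1 : u t1 = u t0 := huconst t1 ht1
      have e1 : u t1 = u t0 + (k.1 : ℝ) := by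
        simp only [hu]
        rw [hx1, hy1, hk2]
        push_cast
        ring_nf
      have : (k.1 : ℝ) = 0 := by linarith [hu1, e1]
      exact hk1 (by exact_mod_cast this)
    · -- nonzero level: trajectory is bounded
      apply hunb
      rw [isBounded_iff_forall_norm_le]
      have hsin_ne : ∀ t ∈ I, Real.sin (Real.pi * (γ t).2) ≠ 0 := fun t ht =>
        sin_pi_ne (hstrip t ht)
      have hcabs : ∀ t ∈ I, |c| ≤ Real.exp (-(1 / Real.sin (Real.pi * (γ t).2) ^ 2)) := by
        intro t ht
        have h := hphieq t ht
        rw [hphiconst t ht] at h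
        rw [h, abs_mul, abs_of_pos (Real.exp_pos _)]
        have h1 := Real.abs_sin_le_one (2 * Real.pi * u t)
        nlinarith [Real.exp_pos (-(1 / Real.sin (Real.pi * (γ t).2) ^ 2)),
          abs_nonneg (Real.sin (2 * Real.pi * u t))]
      have hclt1 : |c| < 1 := by
        refine lt_of_le_of_lt (hcabs t0 ht0) (Real.exp_lt_one_iff.mpr ?_)
        have hs2 : 0 < Real.sin (Real.pi * (γ t0).2) ^ 2 :=
          lt_of_le_of_ne (sq_nonneg _) (Ne.symm (pow_ne_zero 2 (hsin_ne t0 ht0)))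
        have : 0 < 1 / Real.sin (Real.pi * (γ t0).2) ^ 2 := by positivity
        linarith
      have hcpos : 0 < |c| := abs_pos.mpr hc0
      set L : ℝ := -Real.log |c| with hL
      have hLpos : 0 < L := by rw [hL]; linarith [Real.log_neg hcpos hclt1]
      have hyδ : ∀ t ∈ I, Real.sqrt (1 / L) / Real.pi ≤ (γ t).2 - n := by
        intro t ht
        have h1 : Real.log |c| ≤ -(1 / Real.sin (Real.pi * (γ t).2) ^ 2) :=
          (Real.log_le_iff_le_exp hcpos).mpr (hcabs t ht)
        have hs2 : 0 < Real.sin (Real.pi * (γ t).2) ^ 2 :=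
          lt_of_le_of_ne (sq_nonneg _) (Ne.symm (pow_ne_zero 2 (hsin_ne t ht)))
        have h2 : 1 / Real.sin (Real.pi * (γ t).2) ^ 2 ≤ L := by rw [hL]; linarith
        have h3 : 1 / L ≤ Real.sin (Real.pi * (γ t).2) ^ 2 := by
          rw [div_le_iff₀ hLpos]
          have := (div_le_iff₀ hs2).mp h2
          linarith
        have h4 : Real.sqrt (1 / L) ≤ |Real.sin (Real.pi * (γ t).2)| := by
          rw [← Real.sqrt_sq_eq_abs]
          exact Real.sqrt_le_sqrt h3
        have h5 : |Real.sin (Real.pi * (γ t).2)| =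
            |Real.sin (Real.pi * ((γ t).2 - n))| := abs_sin_pi_shift n _
        have h6 : |Real.sin (Real.pi * ((γ t).2 - n))| ≤ Real.pi * ((γ t).2 - n) := by
          have h7 := Real.abs_sin_le_abs (x := Real.pi * ((γ t).2 - n))
          rwa [abs_of_pos (mul_pos Real.pi_pos (hypos t ht))] at h7
        rw [div_le_iff₀ Real.pi_pos]
        calc Real.sqrt (1 / L) ≤ |Real.sin (Real.pi * (γ t).2)| := h4
          _ ≤ Real.pi * ((γ t).2 - n) := by rw [h5]; exact h6
          _ = ((γ t).2 - n) * Real.pi := by ring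
      set δ : ℝ := Real.sqrt (1 / L) / Real.pi with hδ
      have hδpos : 0 < δ := by
        rw [hδ]
        have : 0 < Real.sqrt (1 / L) := Real.sqrt_pos.mpr (by positivity)
        positivity
      have hδlt1 : δ < 1 := by
        linarith [hyδ t0 ht0, ht0strip.2]
      have hlogbound : ∀ t ∈ I, |Real.log ((γ t).2 - n)| ≤ -Real.log δ := by
        intro t ht
        have h1 : Real.log δ ≤ Real.log ((γ t).2 - n) :=
          (Real.log_le_log_iff hδpos (hypos t ht)).mpr (hyδ t ht)
        have h2 : Real.log ((γ t).2 - n) ≤ 0 :=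
          Real.log_nonpos (hypos t ht).le (by linarith [(hstrip t ht).2])
        have h3 : Real.log δ < 0 := Real.log_neg hδpos hδlt1
        rw [abs_le]
        constructor <;> linarith
      have hsin_ne2 : ∀ t ∈ I, Real.sin (2 * Real.pi * u t) ≠ 0 := by
        intro t ht h0
        have h := hphieq t ht
        rw [hphiconst t ht, h0, mul_zero] at h
        exact hc0 h
      have hub : ∀ t ∈ I, |u t - u t0| < 1 := by
        intro t ht
        by_contra hge
        push_neg at hge
        have hsubI : Set.uIcc t0 t ⊆ I := hIoc.uIcc_subset ht0 ht
        have hcont : ContinuousOn u (Set.uIcc t0 t) := fun s hs =>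
          (hucont s (hsubI hs)).continuousWithinAt
        set a := min (u t0) (u t) with ha
        set b := max (u t0) (u t) with hb
        have hab : a + 1 ≤ b := by
          have h1 : b - a = |u t - u t0| := max_sub_min_eq_abs (u t0) (u t)
          linarith
        have hj1 : a ≤ (⌈a⌉ : ℝ) := Int.le_ceil a
        have hj2 : ((⌈a⌉ : ℤ) : ℝ) ≤ b := le_trans (Int.ceil_lt_add_one (R := ℝ) a).le hab
        have hmem : ((⌈a⌉ : ℤ) : ℝ) ∈ Set.uIcc (u t0) (u t) := mem_uIcc_minmax hj1 hj2
        obtain ⟨s, hs, hseq⟩ := intermediate_value_uIcc hcont hmem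
        apply hsin_ne2 s (hsubI hs)
        rw [hseq]
        have : 2 * Real.pi * ((⌈a⌉ : ℤ) : ℝ) = ((2 * ⌈a⌉ : ℤ) : ℝ) * Real.pi := by
          push_cast; ring
        rw [this]
        exact Real.sin_int_mul_pi _
      refine ⟨max ((|u t0| + 1) + (-Real.log δ)) (|(n : ℝ)| + 1), ?_⟩
      rintro z ⟨t, ht, rfl⟩
      rw [Prod.norm_def]
      apply max_le
      · refine le_trans ?_ (le_max_left _ _)
        have hxeq : (γ t).1 = u t - Real.log ((γ t).2 - n) := by
          simp only [hu]; ring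
        rw [Real.norm_eq_abs, hxeq]
        have h1 : |u t| ≤ |u t0| + |u t - u t0| := by
          have := abs_add_le (u t0) (u t - u t0)
          simpa using this
        have h2 := hub t ht
        have h3 := hlogbound t ht
        have h4 : |u t - Real.log ((γ t).2 - n)| ≤ |u t| + |Real.log ((γ t).2 - n)| :=
          abs_sub _ _
        linarith
      · refine le_trans ?_ (le_max_right _ _)
        rw [Real.norm_eq_abs]
        have h := hstrip t ht
        rw [abs_le]
        constructor
        · linarith [neg_abs_le (n : ℝ), h.1]
        · linarith [le_abs_self (n : ℝ), h.2]
end
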